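/- arXiv:2004.00109 — 10 statements merged into one kernel-verified Lean document; each statement's English description precedes it below -/
import Mathlib

section
/- On the polynomial ring ℝ[x], let μ ∈ ℝ, let R be the parity operator (Rp)(x) = p(−x), let D_μ be the Dunkl operator D_μ p = p' + μ·q where q is the unique polynomial with x·q(x) = p(x) − p(−x), and let X denote multiplication by x. Then the linear operators a = (X + D_μ)/√2 and a† = (X − D_μ)/√2 satisfy the parabosonic commutation relation [a, a†] = I + 2μR, where I is the identity operator. -/
/-- On `ℝ[x]`, the operators `a = (X + D_μ)/√2` and `a† = (X - D_μ)/√2`, where `D_μ` is the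
Dunkl operator `D_μ p = p' + μ·q` with `x·q(x) = p(x) - p(-x)`, `X` is multiplication by `x`
and `R` is the parity operator, satisfy `[a, a†] = I + 2μR`. -/
theorem dunkl_parabosonic_commutation
    (μ : ℝ) (R D Xop a adag : Module.End ℝ (Polynomial ℝ))
    (hR : ∀ p : Polynomial ℝ, R p = p.comp (-Polynomial.X))
    (hX : ∀ p : Polynomial ℝ, Xop p = Polynomial.X * p)
    (hD : ∀ p : Polynomial ℝ, Polynomial.X * D p =
      Polynomial.X * Polynomial.derivative p + μ • (p - p.comp (-Polynomial.X)))
    (ha : a = (Real.sqrt 2)⁻¹ • (Xop + D))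
    (hadag : adag = (Real.sqrt 2)⁻¹ • (Xop - D)) :
    a * adag - adag * a = 1 + (2 * μ) • R := by
  have key : ∀ p : Polynomial ℝ,
      D (Xop p) = Xop (D p) + p + (2 * μ) • p.comp (-Polynomial.X) := by
    intro p
    apply mul_left_cancel₀ (Polynomial.X_ne_zero (R := ℝ))
    rw [hX p, hD (Polynomial.X * p)]
    have hcomp : (Polynomial.X * p).comp (-Polynomial.X) =
        -(Polynomial.X * p.comp (-Polynomial.X)) := by
      simp [Polynomial.mul_comp]
    rw [hcomp, Polynomial.derivative_mul]
    simp only [mul_add, Polynomial.derivative_X, one_mul, hX, hD p]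
    simp only [smul_sub, smul_add, smul_smul, Polynomial.smul_eq_C_mul]
    simp only [Polynomial.C_mul, map_ofNat]
    ring
  have hc : (Real.sqrt 2)⁻¹ * (Real.sqrt 2)⁻¹ = 1 / 2 := by
    rw [← mul_inv, Real.mul_self_sqrt (by norm_num)]
    norm_num
  refine LinearMap.ext fun p => ?_
  simp only [ha, hadag, LinearMap.sub_apply, Module.End.mul_apply, LinearMap.smul_apply,
    LinearMap.add_apply, Module.End.one_apply, map_smul, map_add, map_sub, hR,
    LinearMap.add_apply, LinearMap.sub_apply, key]
  have hs : ((Real.sqrt 2)⁻¹ : ℝ) ^ 2 = 1 / 2 := by rw [sq]; exact hc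
  match_scalars <;> ring_nf <;> simp only [hs] <;> ring
end

section
/- Let A be a unital associative ℂ-algebra containing elements a₁, a₂, a₁†, a₂†, R₁, R₂ and real scalars μ₁, μ₂ satisfying the two-dimensional parabosonic relations. Set Hᵢ = (1/2){aᵢ†,aᵢ}, H₁₂ = H₁ + H₂, J₁ = (1/2)(a₁†a₂ + a₁a₂†), J₂ = (1/(2i))(a₁†a₂ − a₁a₂†), J₃ = (1/2)(H₁ − H₂). Then J₁, J₂, J₃, R₁, R₂ all commute with H₁₂. -/
set_option maxHeartbeats 4000000 in
/-- In the two-dimensional parabosonic algebra, the operators `J₁`, `J₂`, `J₃`, `R₁`, `R₂`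
all commute with the total Hamiltonian `H₁₂ = H₁ + H₂`. -/
theorem sd_symmetries_commute_with_H
    {A : Type*} [Ring A] [Algebra ℂ A]
    (a1 a2 ad1 ad2 R1 R2 : A) (μ1 μ2 : ℝ)
    (h11 : a1 * ad1 - ad1 * a1 = 1 + ((2 * μ1 : ℝ) : ℂ) • R1)
    (h22 : a2 * ad2 - ad2 * a2 = 1 + ((2 * μ2 : ℝ) : ℂ) • R2)
    (haa : a1 * a2 = a2 * a1)
    (hdd : ad1 * ad2 = ad2 * ad1)
    (h1d2 : a1 * ad2 = ad2 * a1)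
    (h2d1 : a2 * ad1 = ad1 * a2)
    (hR1sq : R1 * R1 = 1) (hR2sq : R2 * R2 = 1)
    (hR1a1 : R1 * a1 + a1 * R1 = 0) (hR1ad1 : R1 * ad1 + ad1 * R1 = 0)
    (hR2a2 : R2 * a2 + a2 * R2 = 0) (hR2ad2 : R2 * ad2 + ad2 * R2 = 0)
    (hR1a2 : R1 * a2 = a2 * R1) (hR1ad2 : R1 * ad2 = ad2 * R1)
    (hR2a1 : R2 * a1 = a1 * R2) (hR2ad1 : R2 * ad1 = ad1 * R2)
    (hRR : R1 * R2 = R2 * R1) :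
    let H1 := (2⁻¹ : ℂ) • (ad1 * a1 + a1 * ad1)
    let H2 := (2⁻¹ : ℂ) • (ad2 * a2 + a2 * ad2)
    let H12 := H1 + H2
    let J1 := (2⁻¹ : ℂ) • (ad1 * a2 + a1 * ad2)
    let J2 := ((2 * Complex.I : ℂ))⁻¹ • (ad1 * a2 - a1 * ad2)
    let J3 := (2⁻¹ : ℂ) • (H1 - H2)
    J1 * H12 = H12 * J1 ∧
    J2 * H12 = H12 * J2 ∧
    J3 * H12 = H12 * J3 ∧
    R1 * H12 = H12 * R1 ∧
    R2 * H12 = H12 * R2 := by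
  intro H1 H2 H12 J1 J2 J3
  have ext : ∀ (u v w : A), u * v = w → ∀ z, u * (v * z) = w * z := by
    intro u v w h z; rw [← mul_assoc, h]
  have e1 : a1 * ad1 = ad1 * a1 + 1 + ((2 * μ1 : ℝ) : ℂ) • R1 := by
    have h := sub_eq_iff_eq_add.mp h11; rw [h]; abel
  have e2 : a2 * ad2 = ad2 * a2 + 1 + ((2 * μ2 : ℝ) : ℂ) • R2 := by
    have h := sub_eq_iff_eq_add.mp h22; rw [h]; abel
  have r11 : R1 * a1 = -(a1 * R1) := eq_neg_of_add_eq_zero_left hR1a1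
  have r1d1 : R1 * ad1 = -(ad1 * R1) := eq_neg_of_add_eq_zero_left hR1ad1
  have r22 : R2 * a2 = -(a2 * R2) := eq_neg_of_add_eq_zero_left hR2a2
  have r2d2 : R2 * ad2 = -(ad2 * R2) := eq_neg_of_add_eq_zero_left hR2ad2
  have e1' := ext _ _ _ e1
  have e2' := ext _ _ _ e2
  have r11' := ext _ _ _ r11
  have r1d1' := ext _ _ _ r1d1
  have r22' := ext _ _ _ r22
  have r2d2' := ext _ _ _ r2d2
  have haa' := ext _ _ _ haa.symm
  have hdd' := ext _ _ _ hdd.symm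
  have h1d2' := ext _ _ _ h1d2.symm
  have h2d1' := ext _ _ _ h2d1
  have hR1a2' := ext _ _ _ hR1a2
  have hR1ad2' := ext _ _ _ hR1ad2
  have hR2a1' := ext _ _ _ hR2a1
  have hR2ad1' := ext _ _ _ hR2ad1
  have hRR' := ext _ _ _ hRR.symm
  have hR1sq' := ext _ _ _ hR1sq
  have hR2sq' := ext _ _ _ hR2sq
  refine ⟨?_, ?_, ?_, ?_, ?_⟩ <;>
  · show _ = _
    simp only [J1, J2, J3, H12, H1, H2]
    simp only [mul_add, add_mul, mul_sub, sub_mul, mul_assoc, mul_one, one_mul,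
      mul_neg, neg_mul, smul_neg, mul_smul_comm, smul_mul_assoc, smul_add, smul_sub,
      smul_smul, two_mul,
      e1, e2, r11, r1d1, r22, r2d2, haa.symm, hdd.symm, h1d2.symm, h2d1, hR1a2,
      hR1ad2, hR2a1, hR2ad1, hRR.symm, hR1sq, hR2sq,
      e1', e2', r11', r1d1', r22', r2d2', haa', hdd', h1d2', h2d1', hR1a2',
      hR1ad2', hR2a1', hR2ad1', hRR', hR1sq', hR2sq']
    module
end

section
/- Let A be a unital associative ℂ-algebra containing elements a₁, a₂, a₁†, a₂†, R₁, R₂ and real scalars μ₁, μ₂ satisfying the two-dimensional parabosonic relations. Set Hᵢ = (1/2){aᵢ†,aᵢ}, H₁₂ = H₁ + H₂, J₁ = (1/2)(a₁†a₂ + a₁a₂†), J₂ = (1/(2i))(a₁†a₂ − a₁a₂†), J₃ = (1/2)(H₁ − H₂). Then the Schwinger–Dunkl relations hold: [J₂,J₃] = iJ₁, [J₃,J₁] = iJ₂, [J₁,J₂] = i( J₃(1 + μ₁R₁ + μ₂R₂) − (1/2)H₁₂(μ₁R₁ − μ₂R₂) ), and {J₁,R_α} = 0, {J₂,R_α} =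 0, [J₃,R_α] = 0 for α = 1,2. -/
/-- The Schwinger construction with parabosonic (Dunkl) oscillators realizes the
Schwinger–Dunkl algebra `sd(2)`. -/
theorem schwinger_dunkl_realization
    {A : Type*} [Ring A] [Algebra ℂ A]
    (a1 a2 ad1 ad2 R1 R2 : A) (μ1 μ2 : ℝ)
    (h11 : a1 * ad1 - ad1 * a1 = 1 + ((2 * μ1 : ℝ) : ℂ) • R1)
    (h22 : a2 * ad2 - ad2 * a2 = 1 + ((2 * μ2 : ℝ) : ℂ) • R2)
    (haa : a1 * a2 = a2 * a1)
    (hdd : ad1 * ad2 = ad2 * ad1)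
    (h1d2 : a1 * ad2 = ad2 * a1)
    (h2d1 : a2 * ad1 = ad1 * a2)
    (hR1sq : R1 * R1 = 1) (hR2sq : R2 * R2 = 1)
    (hR1a1 : R1 * a1 + a1 * R1 = 0) (hR1ad1 : R1 * ad1 + ad1 * R1 = 0)
    (hR2a2 : R2 * a2 + a2 * R2 = 0) (hR2ad2 : R2 * ad2 + ad2 * R2 = 0)
    (hR1a2 : R1 * a2 = a2 * R1) (hR1ad2 : R1 * ad2 = ad2 * R1)
    (hR2a1 : R2 * a1 = a1 * R2) (hR2ad1 : R2 * ad1 = ad1 * R2)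
    (hRR : R1 * R2 = R2 * R1) :
    let H1 := (2⁻¹ : ℂ) • (ad1 * a1 + a1 * ad1)
    let H2 := (2⁻¹ : ℂ) • (ad2 * a2 + a2 * ad2)
    let H12 := H1 + H2
    let J1 := (2⁻¹ : ℂ) • (ad1 * a2 + a1 * ad2)
    let J2 := ((2 * Complex.I : ℂ))⁻¹ • (ad1 * a2 - a1 * ad2)
    let J3 := (2⁻¹ : ℂ) • (H1 - H2)
    J2 * J3 - J3 * J2 = Complex.I • J1 ∧
    J3 * J1 - J1 * J3 = Complex.I • J2 ∧
    J1 * J2 - J2 * J1 =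
      Complex.I • (J3 * (1 + (μ1 : ℂ) • R1 + (μ2 : ℂ) • R2)
        - (2⁻¹ : ℂ) • (H12 * ((μ1 : ℂ) • R1 - (μ2 : ℂ) • R2))) ∧
    J1 * R1 + R1 * J1 = 0 ∧ J1 * R2 + R2 * J1 = 0 ∧
    J2 * R1 + R1 * J2 = 0 ∧ J2 * R2 + R2 * J2 = 0 ∧
    J3 * R1 - R1 * J3 = 0 ∧ J3 * R2 - R2 * J3 = 0 := by
  have h2I : ((2 * Complex.I : ℂ))⁻¹ = -(2⁻¹ * Complex.I) := by
    rw [mul_inv, Complex.inv_I]; ring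
  have e1 : a1 * ad1 = ad1 * a1 + (1 + ((2 * μ1 : ℝ) : ℂ) • R1) :=
    by rw [← h11]; abel
  have e2 : a2 * ad2 = ad2 * a2 + (1 + ((2 * μ2 : ℝ) : ℂ) • R2) :=
    by rw [← h22]; abel
  have s1 : a2 * a1 = a1 * a2 := haa.symm
  have s2 : ad2 * ad1 = ad1 * ad2 := hdd.symm
  have r1 : R1 * a1 = -(a1 * R1) := eq_neg_of_add_eq_zero_left hR1a1
  have r2 : R1 * ad1 = -(ad1 * R1) := eq_neg_of_add_eq_zero_left hR1ad1
  have r3 : R2 * a2 = -(a2 * R2) := eq_neg_of_add_eq_zero_left hR2a2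
  have r4 : R2 * ad2 = -(ad2 * R2) := eq_neg_of_add_eq_zero_left hR2ad2
  have rr : R2 * R1 = R1 * R2 := hRR.symm
  -- extended (right-associated) versions
  have e1' : ∀ z : A, a1 * (ad1 * z) = (ad1 * a1 + (1 + ((2 * μ1 : ℝ) : ℂ) • R1)) * z :=
    fun z => by rw [← mul_assoc, e1]
  have e2' : ∀ z : A, a2 * (ad2 * z) = (ad2 * a2 + (1 + ((2 * μ2 : ℝ) : ℂ) • R2)) * z :=
    fun z => by rw [← mul_assoc, e2]
  have s1' : ∀ z : A, a2 * (a1 * z) = a1 * (a2 * z) := fun z => by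
    rw [← mul_assoc, s1, mul_assoc]
  have s2' : ∀ z : A, ad2 * (ad1 * z) = ad1 * (ad2 * z) := fun z => by
    rw [← mul_assoc, s2, mul_assoc]
  have t1' : ∀ z : A, a1 * (ad2 * z) = ad2 * (a1 * z) := fun z => by
    rw [← mul_assoc, h1d2, mul_assoc]
  have t2' : ∀ z : A, a2 * (ad1 * z) = ad1 * (a2 * z) := fun z => by
    rw [← mul_assoc, h2d1, mul_assoc]
  have r1' : ∀ z : A, R1 * (a1 * z) = -(a1 * (R1 * z)) := fun z => by
    rw [← mul_assoc, r1, neg_mul, mul_assoc]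
  have r2' : ∀ z : A, R1 * (ad1 * z) = -(ad1 * (R1 * z)) := fun z => by
    rw [← mul_assoc, r2, neg_mul, mul_assoc]
  have r3' : ∀ z : A, R2 * (a2 * z) = -(a2 * (R2 * z)) := fun z => by
    rw [← mul_assoc, r3, neg_mul, mul_assoc]
  have r4' : ∀ z : A, R2 * (ad2 * z) = -(ad2 * (R2 * z)) := fun z => by
    rw [← mul_assoc, r4, neg_mul, mul_assoc]
  have u1' : ∀ z : A, R1 * (a2 * z) = a2 * (R1 * z) := fun z => by
    rw [← mul_assoc, hR1a2, mul_assoc]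
  have u2' : ∀ z : A, R1 * (ad2 * z) = ad2 * (R1 * z) := fun z => by
    rw [← mul_assoc, hR1ad2, mul_assoc]
  have u3' : ∀ z : A, R2 * (a1 * z) = a1 * (R2 * z) := fun z => by
    rw [← mul_assoc, hR2a1, mul_assoc]
  have u4' : ∀ z : A, R2 * (ad1 * z) = ad1 * (R2 * z) := fun z => by
    rw [← mul_assoc, hR2ad1, mul_assoc]
  have rr' : ∀ z : A, R2 * (R1 * z) = R1 * (R2 * z) := fun z => by
    rw [← mul_assoc, rr, mul_assoc]
  have q1' : ∀ z : A, R1 * (R1 * z) = z := fun z => by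
    rw [← mul_assoc, hR1sq, one_mul]
  have q2' : ∀ z : A, R2 * (R2 * z) = z := fun z => by
    rw [← mul_assoc, hR2sq, one_mul]
  refine ⟨?_, ?_, ?_, ?_, ?_, ?_, ?_, ?_, ?_⟩ <;>
  · simp only [h2I, smul_smul, smul_mul_assoc, mul_smul_comm, mul_add, add_mul, mul_sub,
      sub_mul, mul_one, one_mul, mul_neg, neg_mul, smul_neg, smul_add, smul_sub, neg_neg,
      mul_assoc, e1, e1', e2, e2', s1, s1', s2, s2', h1d2, t1', h2d1, t2',
      r1, r1', r2, r2', r3, r3', r4, r4', hR1a2, u1', hR1ad2, u2', hR2a1, u3', hR2ad1, u4',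
      rr, rr', hR1sq, q1', hR2sq, q2']
    match_scalars <;> (try ring_nf; try simp [Complex.I_sq]; try ring_nf; try norm_num)
end

section
/- Let V = MvPolynomial (Fin 4) ℂ ⊗_ℂ Cl as above, with L_{μν} = a_μ†a_ν − a_μa_ν†, Σ_{μν} = (1/2)γ_μγ_ν, J_{μν} = −i(L_{μν} + Σ_{μν}), and H = (1/2)Σ_{μ=1}^4 {a_μ†, a_μ}. Define 𝒦₁ = (1/2)(a₁†a₁ + a₂†a₂ − a₃†a₃ − a₄†a₄), 𝒦₂ = 2( L₁₂Σ₁₂ + L₁₃Σ₁₃ + L₁₄Σ₁₄ + L₂₃Σ₂₃ + L₂₄Σ₂₄ + L₃₄Σ₃₄ − 3/4 ), r = iγ₁γ₂, ℛ = −γ₁γ₂γ₃γ₄. Then each of 𝒦₁, 𝒦₂, r, ℛ commutes with each of H, J₁₂, and J₃₄. -/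
noncomputable section

open scoped TensorProduct

/-- The polynomial factor `ℂ[x₁,…,x₄]`. -/
abbrev Mpoly : Type := MvPolynomial (Fin 4) ℂ

/-- The standard quadratic form `Q(v) = Σ_μ v_μ²` on `ℂ⁴`. -/
def Qform : QuadraticForm ℂ (Fin 4 → ℂ) :=
  QuadraticMap.weightedSumSquares ℂ (fun _ : Fin 4 => (1 : ℂ))

/-- The Clifford algebra of `ℂ⁴`. -/
abbrev Cl : Type := CliffordAlgebra Qform

/-- The Clifford generators `γ_μ = ι(e_μ)`. -/
def γc (μ : Fin 4) : Cl := CliffordAlgebra.ι Qform (Pi.single μ 1)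

/-- The representation space `V = ℂ[x₁,…,x₄] ⊗ Cl`. -/
abbrev V : Type := Mpoly ⊗[ℂ] Cl

/-- `a_μ = ∂/∂x_μ` acting on the first factor of `V`. -/
def aop (μ : Fin 4) : Module.End ℂ V :=
  LinearMap.rTensor Cl (MvPolynomial.pderiv μ).toLinearMap

/-- `a_μ† = x_μ·` acting on the first factor of `V`. -/
def adop (μ : Fin 4) : Module.End ℂ V :=
  LinearMap.rTensor Cl (LinearMap.mulLeft ℂ (MvPolynomial.X μ : Mpoly))

/-- `γ_μ` acting by left multiplication on the second factor of `V`. -/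
def gop (μ : Fin 4) : Module.End ℂ V :=
  LinearMap.lTensor Mpoly (LinearMap.mulLeft ℂ (γc μ))

/-- `L_{μν} = a_μ†a_ν - a_μa_ν†`. -/
def Lop (μ ν : Fin 4) : Module.End ℂ V := adop μ * aop ν - aop μ * adop ν

/-- `Σ_{μν} = (1/2)γ_μγ_ν`. -/
def Sop (μ ν : Fin 4) : Module.End ℂ V := (2⁻¹ : ℂ) • (gop μ * gop ν)

/-- The total angular momentum `J_{μν} = -i(L_{μν} + Σ_{μν})` for `μ ≠ ν`, with the
convention `J_{μμ} = 0`. -/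
def Jop (μ ν : Fin 4) : Module.End ℂ V :=
  if μ = ν then 0 else -(Complex.I • (Lop μ ν + Sop μ ν))

/-- The Hamiltonian `H = (1/2)Σ_μ {a_μ†, a_μ}`. -/
def Hop : Module.End ℂ V :=
  (2⁻¹ : ℂ) • ∑ μ : Fin 4, (adop μ * aop μ + aop μ * adop μ)

/-!
The bilinears `a_μ† a_ν` of a representation of the canonical commutation relations satisfy the
`gl(n)` relations, so the orbital operators `L_{μν}` and the spin operators `Σ_{μν}` are two
commuting families of `so(4)` generators, and every weighted number operator
`N_w = Σ_μ w_μ a_μ† a_μ` commutes with `L_{μν}` as soon as `w_μ = w_ν`. Since `H = N_1 + 2`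
and `𝒦₁ = N_w` with `w = (½, ½, -½, -½)`, this settles `𝒦₁`. Under the rotation generated by
`J₁₂`, the pairs `(L_{1k}, L_{2k})` and `(Σ_{1k}, Σ_{2k})` (`k = 3, 4`) rotate as vectors, so
their dot product is invariant; the same holds for `J₃₄` and `k = 1, 2`. Hence
`𝒦₂ = 2 (L·Σ - 3/4)` is invariant. Finally `r` and `ℛ` are products of `γ₁γ₂` and `γ₃γ₄`, which
commute with all bosonic operators and with `Σ₁₂`, `Σ₃₄`.

All of this holds in any complex algebra generated by mutually commuting CCR and Clifford
generators; the theorem is the instance `Module.End ℂ V`.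
-/

-- Equips the ring commutator `⁅x, y⁆ = x * y - y * x` with the `LieRing` API.
attribute [local instance] LieRing.ofAssociativeRing

theorem lie_mul_right {A : Type*} [Ring A] (x y z : A) :
    ⁅x, y * z⁆ = ⁅x, y⁆ * z + y * ⁅x, z⁆ := by
  simp only [LieRing.of_associative_ring_bracket]
  noncomm_ring

section CCR

variable {A B : Type*} [Ring A] [Ring B] {ι : Type*} [DecidableEq ι]

structure IsCCR (a ad : ι → A) : Prop where
  commute_a : ∀ i j, Commute (a i) (a j)
  commute_ad : ∀ i j, Commute (ad i) (ad j)
  a_mul_ad : ∀ i j, a i * ad j = ad j * a i + if i = j then 1 else 0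

def angMom (a ad : ι → A) (i j : ι) : A := ad i * a j - a i * ad j

def numberOp [Fintype ι] {R : Type*} [CommRing R] [Algebra R A] (a ad : ι → A) (w : ι → R) : A :=
  ∑ i, w i • (ad i * a i)

variable {a ad : ι → A}

theorem IsCCR.map (h : IsCCR a ad) (f : A →+* B) : IsCCR (f ∘ a) (f ∘ ad) where
  commute_a i j := (h.commute_a i j).map f
  commute_ad i j := (h.commute_ad i j).map f
  a_mul_ad i j := by
    simp only [Function.comp_apply, ← map_mul, h.a_mul_ad i j]
    split_ifs <;> simp

theorem IsCCR.a_mul_ad_of_ne (h : IsCCR a ad) {i j : ι} (hij : i ≠ j) :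
    a i * ad j = ad j * a i := by
  simpa [hij] using h.a_mul_ad i j

theorem IsCCR.a_mul_ad_self (h : IsCCR a ad) (i : ι) : a i * ad i = ad i * a i + 1 := by
  simpa using h.a_mul_ad i i

theorem IsCCR.lie_ad_mul_a (h : IsCCR a ad) (i j k l : ι) :
    ⁅ad i * a j, ad k * a l⁆ =
      (if j = k then ad i * a l else 0) - if l = i then ad k * a j else 0 := by
  have expand : ∀ i j k l, ad i * a j * (ad k * a l) =
      ad i * ad k * (a j * a l) + if j = k then ad i * a l else 0 := by
    intro i j k l
    rw [mul_assoc, ← mul_assoc (a j), h.a_mul_ad]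
    split_ifs <;> noncomm_ring
  rw [LieRing.of_associative_ring_bracket, expand, expand, (h.commute_ad i k).eq,
    (h.commute_a j l).eq]
  abel

theorem IsCCR.angMom_of_ne (h : IsCCR a ad) {i j : ι} (hij : i ≠ j) :
    angMom a ad i j = ad i * a j - ad j * a i := by
  rw [angMom, h.a_mul_ad_of_ne hij]

theorem IsCCR.lie_numberOp [Fintype ι] {R : Type*} [CommRing R] [Algebra R A] (h : IsCCR a ad)
    (w : ι → R) (k l : ι) : ⁅numberOp a ad w, ad k * a l⁆ = (w k - w l) • (ad k * a l) := by
  simp [numberOp, sum_lie, h.lie_ad_mul_a, smul_sub, Finset.sum_sub_distrib, smul_ite, sub_smul]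

theorem IsCCR.commute_numberOp_angMom [Fintype ι] {R : Type*} [CommRing R] [Algebra R A]
    (h : IsCCR a ad) {w : ι → R} {k l : ι} (hkl : k ≠ l) (hw : w k = w l) :
    Commute (numberOp a ad w) (angMom a ad k l) := by
  rw [commute_iff_lie_eq, h.angMom_of_ne hkl, lie_sub, h.lie_numberOp, h.lie_numberOp, hw]
  simp

theorem IsCCR.commute_numberOp_numberOp [Fintype ι] {R : Type*} [CommRing R] [Algebra R A]
    (h : IsCCR a ad) (w w' : ι → R) : Commute (numberOp a ad w) (numberOp a ad w') := by
  refine Commute.sum_right _ _ _ fun i _ => Commute.smul_right ?_ _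
  rw [commute_iff_lie_eq, h.lie_numberOp, sub_self, zero_smul]

end CCR

section SOGenerators

variable {A B : Type*} [Ring A] [Ring B] {ι : Type*}

structure IsCliffordGens (γ : ι → A) : Prop where
  sq : ∀ i, γ i * γ i = 1
  anticomm : ∀ {i j}, i ≠ j → γ i * γ j = -(γ j * γ i)

/-- The relations among the off-diagonal entries of the standard generators
`M i j = E i j - E j i` of `so(n)`. -/
structure IsSOGenerators (M : ι → ι → A) : Prop where
  antisymm : ∀ {i j}, i ≠ j → M j i = -M i j
  lie_chain : ∀ {i j k}, i ≠ j → j ≠ k → i ≠ k → ⁅M i j, M j k⁆ = M i k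
  commute_of_disjoint : ∀ {i j k l}, i ≠ j → k ≠ l → i ≠ k → i ≠ l → j ≠ k → j ≠ l →
    Commute (M i j) (M k l)

def spinGen (K : Type*) [Field K] [Algebra K A] (γ : ι → A) (i j : ι) : A :=
  (2⁻¹ : K) • (γ i * γ j)

variable {γ : ι → A}

theorem IsCliffordGens.map (h : IsCliffordGens γ) (f : A →+* B) : IsCliffordGens (f ∘ γ) where
  sq i := by simp only [Function.comp_apply, ← map_mul, h.sq, map_one]
  anticomm hij := by simp only [Function.comp_apply, ← map_mul, h.anticomm hij, map_neg]

theorem IsCliffordGens.commute_mul (h : IsCliffordGens γ) {i j k : ι} (hki : k ≠ i)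
    (hkj : k ≠ j) : Commute (γ i * γ j) (γ k) :=
  calc γ i * γ j * γ k = -(γ i * γ k * γ j) := by
        rw [mul_assoc, h.anticomm hkj.symm]; noncomm_ring
    _ = γ k * (γ i * γ j) := by rw [h.anticomm hki.symm]; noncomm_ring

theorem IsCliffordGens.commute_mul_mul (h : IsCliffordGens γ) {i j k l : ι} (hik : i ≠ k)
    (hil : i ≠ l) (hjk : j ≠ k) (hjl : j ≠ l) : Commute (γ i * γ j) (γ k * γ l) :=
  (h.commute_mul hik.symm hjk.symm).mul_right (h.commute_mul hil.symm hjl.symm)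

theorem IsCliffordGens.lie_mul_mul (h : IsCliffordGens γ) {i j k : ι} (hij : i ≠ j)
    (hjk : j ≠ k) (hik : i ≠ k) : ⁅γ i * γ j, γ j * γ k⁆ = 2 • (γ i * γ k) := by
  have h₁ : γ i * γ j * (γ j * γ k) = γ i * γ k := by
    rw [mul_assoc, ← mul_assoc (γ j), h.sq, one_mul]
  have h₂ : γ j * γ k * (γ i * γ j) = -(γ i * γ k) := by
    rw [show γ j * γ k * (γ i * γ j) = γ j * (γ k * γ i) * γ j by noncomm_ring,
      ← (h.commute_mul hjk hij.symm).eq, mul_assoc, h.sq, mul_one, h.anticomm hik.symm]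
  rw [LieRing.of_associative_ring_bracket, h₁, h₂, sub_neg_eq_add, two_nsmul]

theorem IsCliffordGens.isSOGenerators {K : Type*} [Field K] [Algebra K A]
    (h : IsCliffordGens γ) : IsSOGenerators (spinGen K γ) where
  antisymm hij := by rw [spinGen, spinGen, h.anticomm hij.symm, smul_neg]
  lie_chain hij hjk hik := by
    rw [spinGen, spinGen, spinGen, LieRing.of_associative_ring_bracket, smul_mul_smul_comm,
      smul_mul_smul_comm, ← smul_sub, ← LieRing.of_associative_ring_bracket,
      h.lie_mul_mul hij hjk hik, ← Nat.cast_smul_eq_nsmul K, Nat.cast_ofNat, smul_smul]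
    congr 1
    -- `2⁻¹ * 2⁻¹ * 2 = 2⁻¹` also holds in characteristic 2, where `2⁻¹ = 0`
    rcases eq_or_ne (2 : K) 0 with h2 | h2
    · simp [h2]
    · field_simp
  commute_of_disjoint _ _ hik hil hjk hjl :=
    ((h.commute_mul_mul hik hil hjk hjl).smul_left _).smul_right _

theorem IsCCR.isSOGenerators [DecidableEq ι] {a ad : ι → A} (h : IsCCR a ad) :
    IsSOGenerators (angMom a ad) where
  antisymm hij := by rw [h.angMom_of_ne hij, h.angMom_of_ne hij.symm, neg_sub]
  lie_chain hij hjk hik := by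
    simp only [h.angMom_of_ne, hij, hjk, hik, ne_eq, not_false_eq_true, lie_sub, sub_lie,
      h.lie_ad_mul_a]
    simp [hij.symm, hjk.symm, hik.symm]
  commute_of_disjoint hij hkl hik hil hjk hjl := by
    rw [commute_iff_lie_eq]
    simp only [h.angMom_of_ne, hij, hkl, ne_eq, not_false_eq_true, lie_sub, sub_lie,
      h.lie_ad_mul_a]
    simp [hik, hil, hjk, hjl, hik.symm, hil.symm, hjk.symm, hjl.symm]

variable {M N : ι → ι → A}

theorem IsSOGenerators.lie_same_left (hM : IsSOGenerators M) {i j k : ι} (hij : i ≠ j)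
    (hjk : j ≠ k) (hik : i ≠ k) : ⁅M i j, M i k⁆ = -M j k := by
  rw [hM.antisymm hij.symm, neg_lie, hM.lie_chain hij.symm hik hjk]

theorem IsSOGenerators.commute_add_dot (hM : IsSOGenerators M) (hN : IsSOGenerators N)
    (hMN : ∀ i j k l, Commute (M i j) (N k l)) {i j k : ι} (hij : i ≠ j) (hjk : j ≠ k)
    (hik : i ≠ k) : Commute (M i j + N i j) (M i k * N i k + M j k * N j k) := by
  rw [commute_iff_lie_eq]
  simp only [lie_add, add_lie, lie_mul_right, hM.lie_same_left hij hjk hik,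
    hN.lie_same_left hij hjk hik, hM.lie_chain hij hjk hik, hN.lie_chain hij hjk hik,
    (hMN i j i k).lie_eq, (hMN i j j k).lie_eq, (hMN i k i j).symm.lie_eq,
    (hMN j k i j).symm.lie_eq]
  noncomm_ring

theorem commute_add_mul_self (hMN : ∀ i j k l, Commute (M i j) (N k l)) (i j : ι) :
    Commute (M i j + N i j) (M i j * N i j) :=
  ((Commute.refl _).add_left (hMN i j i j).symm).mul_right ((hMN i j i j).add_left (.refl _))

theorem IsSOGenerators.commute_add_mul_of_disjoint (hM : IsSOGenerators M)
    (hN : IsSOGenerators N) (hMN : ∀ i j k l, Commute (M i j) (N k l)) {i j k l : ι}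
    (hij : i ≠ j) (hkl : k ≠ l) (hik : i ≠ k) (hil : i ≠ l) (hjk : j ≠ k) (hjl : j ≠ l) :
    Commute (M i j + N i j) (M k l * N k l) :=
  ((hM.commute_of_disjoint hij hkl hik hil hjk hjl).add_left (hMN k l i j).symm).mul_right
    ((hMN i j k l).add_left (hN.commute_of_disjoint hij hkl hik hil hjk hjl))

end SOGenerators

section SpinOrbit

variable {A : Type*} [Ring A] {M N : Fin 4 → Fin 4 → A}

def spinOrbit (M N : Fin 4 → Fin 4 → A) : A :=
  M 0 1 * N 0 1 + M 0 2 * N 0 2 + M 0 3 * N 0 3 + M 1 2 * N 1 2 + M 1 3 * N 1 3 + M 2 3 * N 2 3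

theorem commute_spinOrbit {x : A} (hM : ∀ i j, i ≠ j → Commute x (M i j))
    (hN : ∀ i j, i ≠ j → Commute x (N i j)) : Commute x (spinOrbit M N) := by
  have h (i j : Fin 4) (hij : i ≠ j) : Commute x (M i j * N i j) :=
    (hM i j hij).mul_right (hN i j hij)
  exact (((((h 0 1 (by decide)).add_right (h 0 2 (by decide))).add_right
    (h 0 3 (by decide))).add_right (h 1 2 (by decide))).add_right
    (h 1 3 (by decide))).add_right (h 2 3 (by decide))

theorem IsSOGenerators.commute_add_spinOrbit_01 (hM : IsSOGenerators M)
    (hN : IsSOGenerators N) (hMN : ∀ i j k l, Commute (M i j) (N k l)) :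
    Commute (M 0 1 + N 0 1) (spinOrbit M N) := by
  have regroup : spinOrbit M N = M 0 1 * N 0 1 + M 2 3 * N 2 3
      + (M 0 2 * N 0 2 + M 1 2 * N 1 2) + (M 0 3 * N 0 3 + M 1 3 * N 1 3) := by
    unfold spinOrbit; abel
  rw [regroup]
  exact (((commute_add_mul_self hMN 0 1).add_right
    (hM.commute_add_mul_of_disjoint hN hMN (by decide) (by decide) (by decide) (by decide)
      (by decide) (by decide))).add_right
    (hM.commute_add_dot hN hMN (k := 2) (by decide) (by decide) (by decide))).add_right
    (hM.commute_add_dot hN hMN (k := 3) (by decide) (by decide) (by decide))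

theorem IsSOGenerators.commute_add_spinOrbit_23 (hM : IsSOGenerators M)
    (hN : IsSOGenerators N) (hMN : ∀ i j k l, Commute (M i j) (N k l)) :
    Commute (M 2 3 + N 2 3) (spinOrbit M N) := by
  have regroup : spinOrbit M N = M 2 3 * N 2 3 + M 0 1 * N 0 1
      + (M 2 0 * N 2 0 + M 3 0 * N 3 0) + (M 2 1 * N 2 1 + M 3 1 * N 3 1) := by
    simp only [spinOrbit, hM.antisymm (i := 0) (j := 2) (by decide),
      hM.antisymm (i := 0) (j := 3) (by decide), hM.antisymm (i := 1) (j := 2) (by decide),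
      hM.antisymm (i := 1) (j := 3) (by decide), hN.antisymm (i := 0) (j := 2) (by decide),
      hN.antisymm (i := 0) (j := 3) (by decide), hN.antisymm (i := 1) (j := 2) (by decide),
      hN.antisymm (i := 1) (j := 3) (by decide), neg_mul_neg]
    abel
  rw [regroup]
  exact (((commute_add_mul_self hMN 2 3).add_right
    (hM.commute_add_mul_of_disjoint hN hMN (by decide) (by decide) (by decide) (by decide)
      (by decide) (by decide))).add_right
    (hM.commute_add_dot hN hMN (k := 0) (by decide) (by decide) (by decide))).add_right
    (hM.commute_add_dot hN hMN (k := 1) (by decide) (by decide) (by decide))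

end SpinOrbit

section Polynomial

open MvPolynomial

theorem MvPolynomial.pderiv_pderiv_comm {R σ : Type*} [CommRing R] (i j : σ)
    (p : MvPolynomial σ R) : pderiv i (pderiv j p) = pderiv j (pderiv i p) := by
  classical
  have h : ⁅(pderiv i : Derivation R (MvPolynomial σ R) (MvPolynomial σ R)), pderiv j⁆ = 0 :=
    derivation_ext fun k => by
      change pderiv i (pderiv j (X k : MvPolynomial σ R)) - pderiv j (pderiv i (X k)) = 0
      simp [pderiv_X, Pi.single_apply, apply_ite]
  exact sub_eq_zero.1 (DFunLike.congr_fun h p)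

theorem isCCR_pderiv_mulLeft_X {R σ : Type*} [CommRing R] [DecidableEq σ] :
    IsCCR (fun i => (pderiv i : Derivation R (MvPolynomial σ R) (MvPolynomial σ R)).toLinearMap)
      (fun i => LinearMap.mulLeft R (X i)) where
  commute_a i j := LinearMap.ext (pderiv_pderiv_comm i j)
  commute_ad i j := LinearMap.ext fun p => by simp [Module.End.mul_apply, mul_left_comm]
  a_mul_ad i j := LinearMap.ext fun p => by
    rcases eq_or_ne i j with rfl | hij
    · simp [Module.End.mul_apply, add_comm]
    · simp [Module.End.mul_apply, pderiv_X, hij, hij.symm]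

end Polynomial

section Oscillator

variable {A : Type*} [Ring A] [Algebra ℂ A] {ι : Type*}

-- `hamiltonian`, `spinGen ℂ` and `totalAngMom` are `Hop`, `Sop` and `Jop` with the oscillators
-- and the Clifford generators as parameters.
def hamiltonian [Fintype ι] (a ad : ι → A) : A := (2⁻¹ : ℂ) • ∑ i, (ad i * a i + a i * ad i)

def totalAngMom [DecidableEq ι] (a ad γ : ι → A) (i j : ι) : A :=
  if i = j then 0 else -(Complex.I • (angMom a ad i j + spinGen ℂ γ i j))

def orbitalCommutant (a ad : ι → A) : Subalgebra ℂ A :=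
  Subalgebra.centralizer ℂ (Set.range a ∪ Set.range ad)

def symmetryCommutant (a ad γ : Fin 4 → A) : Subalgebra ℂ A :=
  Subalgebra.centralizer ℂ {hamiltonian a ad, totalAngMom a ad γ 0 1, totalAngMom a ad γ 2 3}

variable {a ad γ : ι → A} {x : A}

theorem IsCCR.hamiltonian_eq [Fintype ι] [DecidableEq ι] (h : IsCCR a ad) :
    hamiltonian a ad = numberOp a ad (1 : ι → ℂ) + (2⁻¹ * Fintype.card ι : ℂ) • 1 := by
  simp only [hamiltonian, numberOp, h.a_mul_ad_self, Pi.one_apply, one_smul, ← add_assoc,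
    Finset.sum_add_distrib, Finset.sum_const, Finset.card_univ, smul_add, mul_smul]
  rw [← smul_add, ← two_smul ℂ, smul_smul, ← Nat.cast_smul_eq_nsmul ℂ]
  norm_num

theorem IsCCR.commute_hamiltonian [Fintype ι] [DecidableEq ι] (h : IsCCR a ad)
    (hx : Commute x (numberOp a ad (1 : ι → ℂ))) : Commute x (hamiltonian a ad) := by
  rw [h.hamiltonian_eq]
  exact hx.add_right ((Commute.one_right x).smul_right _)

theorem commute_totalAngMom [DecidableEq ι] {i j : ι}
    (h : Commute x (angMom a ad i j + spinGen ℂ γ i j)) : Commute x (totalAngMom a ad γ i j) := by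
  unfold totalAngMom
  split_ifs
  · exact Commute.zero_right x
  · exact (h.smul_right _).neg_right

theorem commute_of_mem_orbitalCommutant (hx : x ∈ orbitalCommutant a ad) (i : ι) :
    Commute x (a i) ∧ Commute x (ad i) := by
  rw [orbitalCommutant, Subalgebra.mem_centralizer_iff] at hx
  exact ⟨(hx _ (.inl ⟨i, rfl⟩)).symm, (hx _ (.inr ⟨i, rfl⟩)).symm⟩

theorem commute_angMom_of_mem_orbitalCommutant (hx : x ∈ orbitalCommutant a ad) (i j : ι) :
    Commute x (angMom a ad i j) :=
  have hc := commute_of_mem_orbitalCommutant hx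
  ((hc i).2.mul_right (hc j).1).sub_right ((hc i).1.mul_right (hc j).2)

theorem commute_numberOp_of_mem_orbitalCommutant [Fintype ι] {R : Type*} [CommRing R]
    [Algebra R A] (hx : x ∈ orbitalCommutant a ad) (w : ι → R) :
    Commute x (numberOp a ad w) :=
  have hc := commute_of_mem_orbitalCommutant hx
  Commute.sum_right _ _ _ fun i _ => ((hc i).2.mul_right (hc i).1).smul_right _

theorem commute_hamiltonian_of_mem_orbitalCommutant [Fintype ι]
    (hx : x ∈ orbitalCommutant a ad) : Commute x (hamiltonian a ad) :=
  have hc := commute_of_mem_orbitalCommutant hx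
  (Commute.sum_right _ _ _ fun i _ =>
    ((hc i).2.mul_right (hc i).1).add_right ((hc i).1.mul_right (hc i).2)).smul_right _

end Oscillator

section O2PlusO2

variable {A : Type*} [Ring A] [Algebra ℂ A] {a ad γ : Fin 4 → A} {x : A}

theorem mem_symmetryCommutant : x ∈ symmetryCommutant a ad γ ↔
    Commute x (hamiltonian a ad) ∧ Commute x (totalAngMom a ad γ 0 1) ∧
      Commute x (totalAngMom a ad γ 2 3) := by
  simp [symmetryCommutant, Subalgebra.mem_centralizer_iff, Commute, SemiconjBy, eq_comm]

theorem numberOp_mem_symmetryCommutant (hCCR : IsCCR a ad)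
    (hγ : ∀ i, γ i ∈ orbitalCommutant a ad) {w : Fin 4 → ℂ} (h01 : w 0 = w 1) (h23 : w 2 = w 3) :
    numberOp a ad w ∈ symmetryCommutant a ad γ := by
  have hS (i j : Fin 4) : Commute (numberOp a ad w) (spinGen ℂ γ i j) :=
    (commute_numberOp_of_mem_orbitalCommutant (mul_mem (hγ i) (hγ j)) w).symm.smul_right _
  exact mem_symmetryCommutant.2 ⟨hCCR.commute_hamiltonian (hCCR.commute_numberOp_numberOp _ _),
    commute_totalAngMom ((hCCR.commute_numberOp_angMom (by decide) h01).add_right (hS 0 1)),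
    commute_totalAngMom ((hCCR.commute_numberOp_angMom (by decide) h23).add_right (hS 2 3))⟩

theorem spinOrbit_mem_symmetryCommutant (hCCR : IsCCR a ad) (hCl : IsCliffordGens γ)
    (hγ : ∀ i, γ i ∈ orbitalCommutant a ad) :
    spinOrbit (angMom a ad) (spinGen ℂ γ) ∈ symmetryCommutant a ad γ := by
  have hL : IsSOGenerators (angMom a ad) := hCCR.isSOGenerators
  have hS : IsSOGenerators (spinGen ℂ γ) := hCl.isSOGenerators
  have hLS (i j k l : Fin 4) : Commute (angMom a ad i j) (spinGen ℂ γ k l) :=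
    ((commute_angMom_of_mem_orbitalCommutant (mul_mem (hγ k) (hγ l)) i j).smul_left _).symm
  refine mem_symmetryCommutant.2 ⟨hCCR.commute_hamiltonian (commute_spinOrbit ?_ ?_).symm,
    commute_totalAngMom (hL.commute_add_spinOrbit_01 hS hLS).symm,
    commute_totalAngMom (hL.commute_add_spinOrbit_23 hS hLS).symm⟩
  · exact fun i j hij => hCCR.commute_numberOp_angMom hij rfl
  · exact fun i j _ => ((commute_numberOp_of_mem_orbitalCommutant
      (mul_mem (hγ i) (hγ j)) 1).smul_left _).symm

theorem mem_symmetryCommutant_of_mem_orbitalCommutant (hx : x ∈ orbitalCommutant a ad)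
    (h01 : Commute x (γ 0 * γ 1)) (h23 : Commute x (γ 2 * γ 3)) :
    x ∈ symmetryCommutant a ad γ :=
  mem_symmetryCommutant.2 ⟨commute_hamiltonian_of_mem_orbitalCommutant hx,
    commute_totalAngMom ((commute_angMom_of_mem_orbitalCommutant hx 0 1).add_right
      (h01.smul_right _)),
    commute_totalAngMom ((commute_angMom_of_mem_orbitalCommutant hx 2 3).add_right
      (h23.smul_right _))⟩

theorem IsCliffordGens.mul_mem_symmetryCommutant_01 (hCl : IsCliffordGens γ)
    (hγ : ∀ i, γ i ∈ orbitalCommutant a ad) : γ 0 * γ 1 ∈ symmetryCommutant a ad γ :=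
  mem_symmetryCommutant_of_mem_orbitalCommutant (mul_mem (hγ 0) (hγ 1)) (.refl _)
    (hCl.commute_mul_mul (by decide) (by decide) (by decide) (by decide))

theorem IsCliffordGens.mul_mem_symmetryCommutant_23 (hCl : IsCliffordGens γ)
    (hγ : ∀ i, γ i ∈ orbitalCommutant a ad) : γ 2 * γ 3 ∈ symmetryCommutant a ad γ :=
  mem_symmetryCommutant_of_mem_orbitalCommutant (mul_mem (hγ 2) (hγ 3))
    (hCl.commute_mul_mul (by decide) (by decide) (by decide) (by decide)) (.refl _)

theorem o2_plus_o2_invariants_mem_symmetryCommutant (hCCR : IsCCR a ad)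
    (hCl : IsCliffordGens γ) (hγ : ∀ i, γ i ∈ orbitalCommutant a ad) :
    (2⁻¹ : ℂ) • (ad 0 * a 0 + ad 1 * a 1 - ad 2 * a 2 - ad 3 * a 3) ∈ symmetryCommutant a ad γ ∧
    (2 : ℂ) • (spinOrbit (angMom a ad) (spinGen ℂ γ) - (3 / 4 : ℂ) • 1) ∈
      symmetryCommutant a ad γ ∧
    Complex.I • (γ 0 * γ 1) ∈ symmetryCommutant a ad γ ∧
    -(γ 0 * γ 1 * γ 2 * γ 3) ∈ symmetryCommutant a ad γ := by
  have hK1 : (2⁻¹ : ℂ) • (ad 0 * a 0 + ad 1 * a 1 - ad 2 * a 2 - ad 3 * a 3) =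
      numberOp a ad (![2⁻¹, 2⁻¹, -2⁻¹, -2⁻¹] : Fin 4 → ℂ) := by
    simp only [numberOp, Fin.sum_univ_four]
    simp
    module
  have h01 := hCl.mul_mem_symmetryCommutant_01 hγ
  refine ⟨hK1 ▸ numberOp_mem_symmetryCommutant hCCR hγ rfl rfl,
    Subalgebra.smul_mem _ (sub_mem (spinOrbit_mem_symmetryCommutant hCCR hCl hγ)
      (Subalgebra.smul_mem _ (one_mem _) _)) _, Subalgebra.smul_mem _ h01 _, ?_⟩
  rw [mul_assoc (γ 0 * γ 1)]
  exact neg_mem (mul_mem h01 (hCl.mul_mem_symmetryCommutant_23 hγ))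

end O2PlusO2

theorem isCliffordGens_γc : IsCliffordGens γc where
  sq i := by
    have hQ : Qform (Pi.single i 1) = 1 := by
      simp [Qform, QuadraticMap.weightedSumSquares_apply, Pi.single_apply]
    rw [γc, CliffordAlgebra.ι_sq_scalar, hQ, map_one]
  anticomm {i j} hij := by
    have horth : Qform.IsOrtho (Pi.single i 1) (Pi.single j 1) := by
      rw [QuadraticMap.isOrtho_def]
      simp [Qform, QuadraticMap.weightedSumSquares_apply, Pi.single_apply, Finset.sum_add_distrib,
        mul_add, Finset.sum_ite_eq', hij, hij.symm]
    exact eq_neg_of_add_eq_zero_left (CliffordAlgebra.ι_mul_ι_add_swap_of_isOrtho horth)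

-- The ring structure on `Module.End ℂ V` agrees with the one `aop`, `adop` and `gop` are built
-- from only up to unfolding, so the transported relations are matched with `exact`.
theorem isCCR_aop_adop : IsCCR aop adop := by
  have h := (isCCR_pderiv_mulLeft_X (R := ℂ) (σ := Fin 4)).map (B := Module.End ℂ V)
    (Module.End.rTensorAlgHom ℂ Mpoly Cl).toRingHom
  exact h

theorem isCliffordGens_gop : IsCliffordGens gop := by
  have h := isCliffordGens_γc.map (B := Module.End ℂ V)
    ((Module.End.lTensorAlgHom ℂ Cl Mpoly).comp (Algebra.lmul ℂ Cl)).toRingHom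
  exact h

theorem gop_mem_orbitalCommutant (μ : Fin 4) : gop μ ∈ orbitalCommutant aop adop := by
  have h (f : Module.End ℂ Mpoly) :
      LinearMap.rTensor Cl f * gop μ = gop μ * LinearMap.rTensor Cl f :=
    (LinearMap.rTensor_comp_lTensor _ _ _).trans (LinearMap.lTensor_comp_rTensor _ _ _).symm
  rw [orbitalCommutant, Subalgebra.mem_centralizer_iff]
  rintro _ (⟨ν, rfl⟩ | ⟨ν, rfl⟩) <;> exact h _

/-- The operators `𝒦₁`, `𝒦₂`, `r`, `ℛ` commute with `H`, `J₁₂` and `J₃₄`: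
they lie in the commutant of `o(2) ⊕ o(2)` in the spinorial representation of `o(4)`. -/
theorem commutant_of_o2_plus_o2 :
    let K1 : Module.End ℂ V :=
      (2⁻¹ : ℂ) • (adop 0 * aop 0 + adop 1 * aop 1 - adop 2 * aop 2 - adop 3 * aop 3)
    let K2 : Module.End ℂ V :=
      (2 : ℂ) • (Lop 0 1 * Sop 0 1 + Lop 0 2 * Sop 0 2 + Lop 0 3 * Sop 0 3
        + Lop 1 2 * Sop 1 2 + Lop 1 3 * Sop 1 3 + Lop 2 3 * Sop 2 3
        - (3 / 4 : ℂ) • (1 : Module.End ℂ V))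
    let r : Module.End ℂ V := Complex.I • (gop 0 * gop 1)
    let Rc : Module.End ℂ V := -(gop 0 * gop 1 * gop 2 * gop 3)
    (K1 * Hop = Hop * K1) ∧ (K1 * Jop 0 1 = Jop 0 1 * K1) ∧ (K1 * Jop 2 3 = Jop 2 3 * K1) ∧
    (K2 * Hop = Hop * K2) ∧ (K2 * Jop 0 1 = Jop 0 1 * K2) ∧ (K2 * Jop 2 3 = Jop 2 3 * K2) ∧
    (r * Hop = Hop * r) ∧ (r * Jop 0 1 = Jop 0 1 * r) ∧ (r * Jop 2 3 = Jop 2 3 * r) ∧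
    (Rc * Hop = Hop * Rc) ∧ (Rc * Jop 0 1 = Jop 0 1 * Rc) ∧ (Rc * Jop 2 3 = Jop 2 3 * Rc) := by
  intro K1 K2 r Rc
  obtain ⟨hK1, hK2, hr, hRc⟩ := o2_plus_o2_invariants_mem_symmetryCommutant isCCR_aop_adop
    isCliffordGens_gop gop_mem_orbitalCommutant
  obtain ⟨h1, h2, h3⟩ := mem_symmetryCommutant.1 hK1
  obtain ⟨h4, h5, h6⟩ := mem_symmetryCommutant.1 hK2
  obtain ⟨h7, h8, h9⟩ := mem_symmetryCommutant.1 hr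
  obtain ⟨h10, h11, h12⟩ := mem_symmetryCommutant.1 hRc
  exact ⟨h1, h2, h3, h4, h5, h6, h7, h8, h9, h10, h11, h12⟩
end
end

section
/- Let A be a unital associative ℂ-algebra with an osp(1|2) system A₀, A₊, A₋, P. Then the Casimir element Q = (A₊A₋ − A₀ + 1/2)P commutes with each of A₀, A₊, A₋, and P. -/
/-- The Casimir element `Q = (A₊A₋ - A₀ + 1/2)P` of `osp(1|2)` commutes with
all the generators `A₀`, `A₊`, `A₋`, `P`. -/
theorem Casimir_is_central
    {A : Type*} [Ring A] [Algebra ℂ A] (A0 Ap Am P : A)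
    (h1 : Ap * Am + Am * Ap = 2 * A0)
    (h2 : A0 * Ap - Ap * A0 = Ap)
    (h3 : A0 * Am - Am * A0 = -Am)
    (h4 : P * A0 - A0 * P = 0)
    (h5 : P * Ap + Ap * P = 0)
    (h6 : P * Am + Am * P = 0)
    (hP : P * P = 1) :
    let Q := (Ap * Am - A0 + (2⁻¹ : ℂ) • (1 : A)) * P
    Q * A0 = A0 * Q ∧
    Q * Ap = Ap * Q ∧
    Q * Am = Am * Q ∧
    Q * P = P * Q := by
  intro Q
  have e1 : Am * Ap = (2 : ℂ) • A0 - Ap * Am := by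
    rw [eq_sub_iff_add_eq, add_comm]
    rw [show ((2 : ℂ) • A0 : A) = 2 * A0 by
      rw [two_smul, two_mul]]
    exact h1
  have e2 : A0 * Ap = Ap * A0 + Ap := by rw [add_comm]; exact eq_add_of_sub_eq h2
  have e3 : A0 * Am = Am * A0 - Am := by
    rw [eq_add_of_sub_eq h3]; noncomm_ring
  have e4 : P * A0 = A0 * P := by rw [sub_eq_zero] at h4; exact h4
  have e5 : P * Ap = -(Ap * P) := eq_neg_of_add_eq_zero_left h5
  have e6 : P * Am = -(Am * P) := eq_neg_of_add_eq_zero_left h6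
  have r1 : ∀ x : A, Am * (Ap * x) = (2 : ℂ) • (A0 * x) - Ap * (Am * x) := fun x => by
    rw [← mul_assoc, e1, sub_mul, smul_mul_assoc, mul_assoc]
  have r2 : ∀ x : A, A0 * (Ap * x) = Ap * (A0 * x) + Ap * x := fun x => by
    rw [← mul_assoc, e2]; noncomm_ring
  have r3 : ∀ x : A, A0 * (Am * x) = Am * (A0 * x) - Am * x := fun x => by
    rw [← mul_assoc, e3]; noncomm_ring
  have r4 : ∀ x : A, P * (A0 * x) = A0 * (P * x) := fun x => by
    rw [← mul_assoc, e4, mul_assoc]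
  have r5 : ∀ x : A, P * (Ap * x) = -(Ap * (P * x)) := fun x => by
    rw [← mul_assoc, e5]; noncomm_ring
  have r6 : ∀ x : A, P * (Am * x) = -(Am * (P * x)) := fun x => by
    rw [← mul_assoc, e6]; noncomm_ring
  have r7 : ∀ x : A, P * (P * x) = x := fun x => by rw [← mul_assoc, hP, one_mul]
  refine ⟨?_, ?_, ?_, ?_⟩ <;>
  · show ((Ap * Am - A0 + (2⁻¹ : ℂ) • (1 : A)) * P) * _ = _ *
      ((Ap * Am - A0 + (2⁻¹ : ℂ) • (1 : A)) * P)
    simp only [sub_mul, add_mul, mul_sub, mul_add, smul_mul_assoc, mul_smul_comm,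
      one_mul, mul_one, mul_assoc, e1, e2, e3, e4, e5, e6, hP, r1, r2, r3, r4, r5, r6, r7,
      mul_neg, neg_mul, neg_neg, neg_sub, neg_add_rev, smul_neg, smul_sub, smul_add]
    try module
end

section
/- Let μ ≥ 0 be real and ε ∈ {−1, +1}. On the ℂ-vector space with basis {e_n : n ∈ ℕ}, define ℂ-linear operators by A₀ e_n = (n + μ + 1/2) e_n, P e_n = ε(−1)ⁿ e_n, A₊ e_n = √([n+1]_μ) e_{n+1}, A₋ e_n = √([n]_μ) e_{n−1} (with A₋ e₀ = 0), where [n]_μ = n + μ(1 − (−1)ⁿ). Then these operators form an osp(1|2) system: {A₊,A₋} = 2A₀, [A₀,A₊] = A₊, [A₀,A₋] = −A₋, [P,A₀] = 0, {P,A₊} = 0, {P,A₋} = 0, and P² = 1. -/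
/-- The "mu-numbers" `[n]_μ = n + μ(1 - (-1)ⁿ)`. -/
def muNum (μ : ℝ) (n : ℕ) : ℝ := n + μ * (1 - (-1) ^ n)

/-- The discrete series representation `(μ, ε)` of `osp(1|2)`: the operators
`A₀ eₙ = (n + μ + 1/2)eₙ`, `P eₙ = ε(-1)ⁿ eₙ`, `A₊ eₙ = √([n+1]_μ) e_{n+1}`,
`A₋ eₙ = √([n]_μ) e_{n-1}` (with `A₋ e₀ = 0`) form an `osp(1|2)` system. -/
theorem discrete_series_is_osp12_system
    (μ : ℝ) (hμ : 0 ≤ μ) (ε : ℝ) (hε : ε = 1 ∨ ε = -1)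
    (A0 Ap Am P : Module.End ℂ (ℕ →₀ ℂ))
    (hA0 : ∀ n : ℕ, A0 (Finsupp.single n 1) =
      ((n : ℂ) + (μ : ℂ) + 2⁻¹) • Finsupp.single n 1)
    (hP : ∀ n : ℕ, P (Finsupp.single n 1) =
      ((ε : ℂ) * (-1) ^ n) • Finsupp.single n 1)
    (hAp : ∀ n : ℕ, Ap (Finsupp.single n 1) =
      ((Real.sqrt (muNum μ (n + 1)) : ℝ) : ℂ) • Finsupp.single (n + 1) 1)
    (hAm0 : Am (Finsupp.single 0 1) = 0)
    (hAm : ∀ n : ℕ, Am (Finsupp.single (n + 1) 1) =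
      ((Real.sqrt (muNum μ (n + 1)) : ℝ) : ℂ) • Finsupp.single n 1) :
    Ap * Am + Am * Ap = 2 * A0 ∧
    A0 * Ap - Ap * A0 = Ap ∧
    A0 * Am - Am * A0 = -Am ∧
    P * A0 - A0 * P = 0 ∧
    P * Ap + Ap * P = 0 ∧
    P * Am + Am * P = 0 ∧
    P * P = 1 := by
  have hmu : ∀ n, 0 ≤ muNum μ n := by
    intro n
    rcases Nat.even_or_odd n with h | h
    · simp [muNum, h.neg_one_pow]
    · simp [muNum, h.neg_one_pow]
      positivity
  have hsq : ∀ n, ((Real.sqrt (muNum μ n) : ℝ) : ℂ) * ((Real.sqrt (muNum μ n) : ℝ) : ℂ)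
      = ((muNum μ n : ℝ) : ℂ) := by
    intro n; rw [← Complex.ofReal_mul, Real.mul_self_sqrt (hmu n)]
  have hsum : ∀ n : ℕ, ((muNum μ (n+1) : ℝ) : ℂ) + ((muNum μ n : ℝ) : ℂ)
      = 2 * ((n : ℂ) + (μ : ℂ) + 2⁻¹) := by
    intro n
    have h : muNum μ (n+1) + muNum μ n = 2 * ((n : ℝ) + μ + 2⁻¹) := by
      simp [muNum, pow_succ]; ring
    rw [← Complex.ofReal_add, h]
    push_cast; ring
  have hε2 : (ε : ℂ) * ε = 1 := by
    rcases hε with h | h <;> norm_num [h]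
  refine ⟨?_, ?_, ?_, ?_, ?_, ?_, ?_⟩ <;>
    refine Module.Basis.ext (Finsupp.basisSingleOne) fun n => ?_
  · rw [two_mul]
    cases n with
    | zero =>
        simp only [Module.End.mul_apply, LinearMap.add_apply, Finsupp.coe_basisSingleOne,
          hAp, hAm, hAm0, hA0, map_smul, map_zero, smul_smul, smul_zero, zero_add]
        rw [hsq, ← add_smul, Nat.cast_zero]
        congr 1
        have := hsum 0
        have h0 : ((muNum μ 0 : ℝ) : ℂ) = 0 := by simp [muNum]
        rw [h0, add_zero] at this
        rw [this, Nat.cast_zero]; ring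
    | succ n =>
        simp only [Module.End.mul_apply, LinearMap.add_apply, Finsupp.coe_basisSingleOne,
          hAp, hAm, hA0, map_smul, smul_smul]
        rw [hsq, hsq, ← add_smul, ← add_smul, add_comm, hsum (n+1)]
        push_cast; ring_nf
  · simp only [Module.End.mul_apply, LinearMap.sub_apply, Finsupp.coe_basisSingleOne,
      hAp, hA0, map_smul, smul_smul, ← sub_smul]
    congr 1
    push_cast; ring
  · cases n with
    | zero =>
        simp only [Module.End.mul_apply, LinearMap.sub_apply, LinearMap.neg_apply,
          Finsupp.coe_basisSingleOne, hAm0, hA0, map_smul, map_zero, smul_zero]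
        simp
    | succ n =>
        simp only [Module.End.mul_apply, LinearMap.sub_apply, LinearMap.neg_apply,
          Finsupp.coe_basisSingleOne, hAm, hA0, map_smul, smul_smul, ← sub_smul, ← neg_smul]
        congr 1
        push_cast; ring
  · simp only [Module.End.mul_apply, LinearMap.sub_apply, LinearMap.zero_apply,
      Finsupp.coe_basisSingleOne, hP, hA0, map_smul, smul_smul, ← sub_smul]
    convert zero_smul ℂ _
    ring
  · simp only [Module.End.mul_apply, LinearMap.add_apply, LinearMap.zero_apply,
      Finsupp.coe_basisSingleOne, hP, hAp, map_smul, smul_smul, ← add_smul]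
    convert zero_smul ℂ _
    rw [pow_succ]; ring
  · cases n with
    | zero =>
        simp only [Module.End.mul_apply, LinearMap.add_apply, LinearMap.zero_apply,
          Finsupp.coe_basisSingleOne, hP, hAm0, map_smul, map_zero, smul_zero, zero_add]
    | succ n =>
        simp only [Module.End.mul_apply, LinearMap.add_apply, LinearMap.zero_apply,
          Finsupp.coe_basisSingleOne, hP, hAm, map_smul, smul_smul, ← add_smul]
        convert zero_smul ℂ _
        rw [pow_succ]; ring
  · simp only [Module.End.mul_apply, Module.End.one_apply, Finsupp.coe_basisSingleOne,
      hP, map_smul, smul_smul]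
    convert one_smul ℂ _
    rw [mul_mul_mul_comm, hε2, one_mul, ← pow_add]
    exact Even.neg_one_pow ⟨n, rfl⟩
end

section
/- Let A and B be unital associative ℂ-algebras, each equipped with an osp(1|2) system (A₀, A₊, A₋, P) and (B₀, B₊, B₋, P') respectively. In the tensor product algebra A ⊗_ℂ B, define the coproduct elements Δ(A₀) = A₀⊗1 + 1⊗B₀, Δ(A₊) = A₊⊗P' + 1⊗B₊, Δ(A₋) = A₋⊗P' + 1⊗B₋, Δ(P) = P⊗P'. Then (Δ(A₀), Δ(A₊), Δ(A₋), Δ(P)) is again an osp(1|2) system in A ⊗_ℂ B: {Δ(A₊),Δ(A₋)} = 2Δ(A₀), [Δ(A₀),Δ(A₊)] = Δ(A₊), [Δ(A₀),Δ(A₋)] = −Δ(A₋), [Δ(P),Δ(A₀)] = 0, {Δ(P),Δ(A₊)} = 0, {Δ(P),Δ(A₋)} = 0, and Δ(P)² = 1. -/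
open scoped TensorProduct

/-- The coproduct of two `osp(1|2)` systems is again an `osp(1|2)` system in the
tensor product algebra. -/
theorem coproduct_osp12_system
    {A B : Type*} [Ring A] [Algebra ℂ A] [Ring B] [Algebra ℂ B]
    (A0 Ap Am P : A) (B0 Bp Bm P' : B)
    (hA1 : Ap * Am + Am * Ap = 2 * A0)
    (hA2 : A0 * Ap - Ap * A0 = Ap)
    (hA3 : A0 * Am - Am * A0 = -Am)
    (hA4 : P * A0 - A0 * P = 0)
    (hA5 : P * Ap + Ap * P = 0)
    (hA6 : P * Am + Am * P = 0)
    (hA7 : P * P = 1)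
    (hB1 : Bp * Bm + Bm * Bp = 2 * B0)
    (hB2 : B0 * Bp - Bp * B0 = Bp)
    (hB3 : B0 * Bm - Bm * B0 = -Bm)
    (hB4 : P' * B0 - B0 * P' = 0)
    (hB5 : P' * Bp + Bp * P' = 0)
    (hB6 : P' * Bm + Bm * P' = 0)
    (hB7 : P' * P' = 1) :
    let ΔA0 : A ⊗[ℂ] B := A0 ⊗ₜ[ℂ] 1 + 1 ⊗ₜ[ℂ] B0
    let ΔAp : A ⊗[ℂ] B := Ap ⊗ₜ[ℂ] P' + 1 ⊗ₜ[ℂ] Bp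
    let ΔAm : A ⊗[ℂ] B := Am ⊗ₜ[ℂ] P' + 1 ⊗ₜ[ℂ] Bm
    let ΔP : A ⊗[ℂ] B := P ⊗ₜ[ℂ] P'
    ΔAp * ΔAm + ΔAm * ΔAp = 2 * ΔA0 ∧
    ΔA0 * ΔAp - ΔAp * ΔA0 = ΔAp ∧
    ΔA0 * ΔAm - ΔAm * ΔA0 = -ΔAm ∧
    ΔP * ΔA0 - ΔA0 * ΔP = 0 ∧
    ΔP * ΔAp + ΔAp * ΔP = 0 ∧
    ΔP * ΔAm + ΔAm * ΔP = 0 ∧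
    ΔP * ΔP = 1 := by
  have hA4' : P * A0 = A0 * P := sub_eq_zero.mp hA4
  have hA5' : P * Ap = -(Ap * P) := eq_neg_of_add_eq_zero_left hA5
  have hA6' : P * Am = -(Am * P) := eq_neg_of_add_eq_zero_left hA6
  have hB4' : P' * B0 = B0 * P' := sub_eq_zero.mp hB4
  have hB5' : P' * Bp = -(Bp * P') := eq_neg_of_add_eq_zero_left hB5
  have hB6' : P' * Bm = -(Bm * P') := eq_neg_of_add_eq_zero_left hB6
  have hA2' : A0 * Ap = Ap + Ap * A0 := sub_eq_iff_eq_add.mp hA2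
  have hA3' : A0 * Am = -Am + Am * A0 := sub_eq_iff_eq_add.mp hA3
  have hB2' : B0 * Bp = Bp + Bp * B0 := sub_eq_iff_eq_add.mp hB2
  have hB3' : B0 * Bm = -Bm + Bm * B0 := sub_eq_iff_eq_add.mp hB3
  refine ⟨?_, ?_, ?_, ?_, ?_, ?_, ?_⟩
  · -- {Δ(A₊), Δ(A₋)} = 2Δ(A₀)
    have e1 : (Ap * Am) ⊗ₜ[ℂ] (1:B) + (Am * Ap) ⊗ₜ[ℂ] (1:B)
        = A0 ⊗ₜ[ℂ] (1:B) + A0 ⊗ₜ[ℂ] (1:B) := by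
      rw [← TensorProduct.add_tmul, hA1, two_mul, TensorProduct.add_tmul]
    have e2 : (1:A) ⊗ₜ[ℂ] (Bp * Bm) + (1:A) ⊗ₜ[ℂ] (Bm * Bp)
        = (1:A) ⊗ₜ[ℂ] B0 + (1:A) ⊗ₜ[ℂ] B0 := by
      rw [← TensorProduct.tmul_add, hB1, two_mul, TensorProduct.tmul_add]
    simp only [mul_add, add_mul, two_mul, Algebra.TensorProduct.tmul_mul_tmul, one_mul,
      mul_one, hB5', hB6', hB7, TensorProduct.tmul_neg]
    linear_combination (norm := abel) e1 + e2
  · -- [Δ(A₀), Δ(A₊)] = Δ(A₊)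
    have e1 : (A0 * Ap) ⊗ₜ[ℂ] P' = Ap ⊗ₜ[ℂ] P' + (Ap * A0) ⊗ₜ[ℂ] P' := by
      rw [hA2', TensorProduct.add_tmul]
    have e2 : (1:A) ⊗ₜ[ℂ] (B0 * Bp) = (1:A) ⊗ₜ[ℂ] Bp + (1:A) ⊗ₜ[ℂ] (Bp * B0) := by
      rw [hB2', TensorProduct.tmul_add]
    simp only [mul_add, add_mul, Algebra.TensorProduct.tmul_mul_tmul, one_mul, mul_one, hB4']
    linear_combination (norm := abel) e1 + e2
  · -- [Δ(A₀), Δ(A₋)] = -Δ(A₋)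
    have e1 : (A0 * Am) ⊗ₜ[ℂ] P' = -(Am ⊗ₜ[ℂ] P') + (Am * A0) ⊗ₜ[ℂ] P' := by
      rw [hA3', TensorProduct.add_tmul, TensorProduct.neg_tmul]
    have e2 : (1:A) ⊗ₜ[ℂ] (B0 * Bm) = -((1:A) ⊗ₜ[ℂ] Bm) + (1:A) ⊗ₜ[ℂ] (Bm * B0) := by
      rw [hB3', TensorProduct.tmul_add, TensorProduct.tmul_neg]
    simp only [mul_add, add_mul, Algebra.TensorProduct.tmul_mul_tmul, one_mul, mul_one, hB4']
    linear_combination (norm := abel) e1 + e2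
  · -- [Δ(P), Δ(A₀)] = 0
    simp only [mul_add, add_mul, Algebra.TensorProduct.tmul_mul_tmul, one_mul, mul_one,
      hA4', hB4']
    abel
  · -- {Δ(P), Δ(A₊)} = 0
    simp only [mul_add, add_mul, Algebra.TensorProduct.tmul_mul_tmul, one_mul, mul_one,
      hA5', hB5', hB7, TensorProduct.tmul_neg, TensorProduct.neg_tmul]
    abel
  · -- {Δ(P), Δ(A₋)} = 0
    simp only [mul_add, add_mul, Algebra.TensorProduct.tmul_mul_tmul, one_mul, mul_one,
      hA6', hB6', hB7, TensorProduct.tmul_neg, TensorProduct.neg_tmul]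
    abel
  · -- Δ(P)² = 1
    simp only [Algebra.TensorProduct.tmul_mul_tmul, hA7, hB7,
      Algebra.TensorProduct.one_def]
end

section
/- Let A and B be unital associative ℂ-algebras, each with an osp(1|2) system (A₀, A₊, A₋, P) and (B₀, B₊, B₋, P'), with Casimir elements Q = (A₊A₋ − A₀ + 1/2)P and Q' = (B₊B₋ − B₀ + 1/2)P'. Let Q⁽¹²⁾ be the Casimir of the coproduct system in A ⊗_ℂ B, i.e. Q⁽¹²⁾ = (Δ(A₊)Δ(A₋) − Δ(A₀) + 1/2)Δ(P) where Δ(A₀) = A₀⊗1 + 1⊗B₀, Δ(A±) = A±⊗P' + 1⊗B±, Δ(P) = P⊗P'. Then Q⁽¹²⁾ = A₋P⊗B₊ − A₊P⊗B₋ + Q⊗P' + P⊗Q' − (1/2)P⊗P'. -/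
open scoped TensorProduct

/-- The Casimir of the coproduct `osp(1|2)` system expands as
`Q⁽¹²⁾ = A₋P⊗B₊ - A₊P⊗B₋ + Q⊗P' + P⊗Q' - (1/2)P⊗P'`. -/
theorem coproduct_Casimir_expansion
    {A B : Type*} [Ring A] [Algebra ℂ A] [Ring B] [Algebra ℂ B]
    (A0 Ap Am P : A) (B0 Bp Bm P' : B)
    (hA1 : Ap * Am + Am * Ap = 2 * A0)
    (hA2 : A0 * Ap - Ap * A0 = Ap)
    (hA3 : A0 * Am - Am * A0 = -Am)
    (hA4 : P * A0 - A0 * P = 0)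
    (hA5 : P * Ap + Ap * P = 0)
    (hA6 : P * Am + Am * P = 0)
    (hA7 : P * P = 1)
    (hB1 : Bp * Bm + Bm * Bp = 2 * B0)
    (hB2 : B0 * Bp - Bp * B0 = Bp)
    (hB3 : B0 * Bm - Bm * B0 = -Bm)
    (hB4 : P' * B0 - B0 * P' = 0)
    (hB5 : P' * Bp + Bp * P' = 0)
    (hB6 : P' * Bm + Bm * P' = 0)
    (hB7 : P' * P' = 1) :
    let Q : A := (Ap * Am - A0 + (2⁻¹ : ℂ) • (1 : A)) * P
    let Q' : B := (Bp * Bm - B0 + (2⁻¹ : ℂ) • (1 : B)) * P'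
    let ΔA0 : A ⊗[ℂ] B := A0 ⊗ₜ[ℂ] 1 + 1 ⊗ₜ[ℂ] B0
    let ΔAp : A ⊗[ℂ] B := Ap ⊗ₜ[ℂ] P' + 1 ⊗ₜ[ℂ] Bp
    let ΔAm : A ⊗[ℂ] B := Am ⊗ₜ[ℂ] P' + 1 ⊗ₜ[ℂ] Bm
    let ΔP : A ⊗[ℂ] B := P ⊗ₜ[ℂ] P'
    (ΔAp * ΔAm - ΔA0 + (2⁻¹ : ℂ) • (1 : A ⊗[ℂ] B)) * ΔP =
      (Am * P) ⊗ₜ[ℂ] Bp - (Ap * P) ⊗ₜ[ℂ] Bm + Q ⊗ₜ[ℂ] P' + P ⊗ₜ[ℂ] Q'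
        - (2⁻¹ : ℂ) • (P ⊗ₜ[ℂ] P') := by
  intro Q Q' ΔA0 ΔAp ΔAm ΔP
  have e1 : P' * (P' * P') = P' := by rw [hB7, mul_one]
  have e2 : P' * (Bm * P') = -Bm := by
    have h : P' * Bm = -(Bm * P') := by linear_combination (norm := noncomm_ring) hB6
    rw [← mul_assoc, h, neg_mul, mul_assoc, hB7, mul_one]
  have e3 : Bp * (P' * P') = Bp := by rw [hB7, mul_one]
  simp only [Q, Q', ΔA0, ΔAp, ΔAm, ΔP, add_mul, sub_mul, mul_add, smul_mul_assoc, one_mul,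
    Algebra.TensorProduct.tmul_mul_tmul, Algebra.TensorProduct.one_def, mul_assoc,
    e1, e2, e3, mul_one, TensorProduct.tmul_neg, TensorProduct.tmul_smul,
    TensorProduct.smul_tmul', TensorProduct.add_tmul, TensorProduct.sub_tmul,
    TensorProduct.tmul_add, TensorProduct.tmul_sub, TensorProduct.neg_tmul]
  module
end

section
/- Let V = MvPolynomial (Fin 4) ℂ ⊗_ℂ Cl, where Cl is the Clifford algebra of ℂ⁴ with quadratic form Q(v) = Σ_μ v_μ², with a_μ = ∂/∂x_μ and a_μ† = multiplication by x_μ acting on the first factor and γ_μ = ι(e_μ) acting by left multiplication on the second factor. For S one of {1,2}, {3,4}, {1,2,3,4}, define 𝒜₋^S = Σ_{μ∈S} a_μγ_μ, 𝒜₊^S = Σ_{μ∈S} a_μ†γ_μ, 𝒜₀^S = (1/2)Σ_{μ∈S} {a_μ†, a_μ}, and 𝒫^{1,2} = iγ₁γ₂, 𝒫^{3,4} = iγ₃γ₄, 𝒫^{1,2,3,4} = −γ₁γ₂γ₃γ₄. Then for each such S, the operators (𝒜₀^S, 𝒜₊^S, 𝒜₋^S, 𝒫^S) form an osp(1|2)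 system: {𝒜₊^S,𝒜₋^S} = 2𝒜₀^S, [𝒜₀^S,𝒜₊^S] = 𝒜₊^S, [𝒜₀^S,𝒜₋^S] = −𝒜₋^S, [𝒫^S,𝒜₀^S] = 0, {𝒫^S,𝒜₊^S} = {𝒫^S,𝒜₋^S} = 0, and (𝒫^S)² = 1. -/
noncomputable section

open scoped TensorProduct

/-- `𝒜₋^S = Σ_{μ∈S} a_μγ_μ`. -/
def AmS (S : Finset (Fin 4)) : Module.End ℂ V := ∑ μ ∈ S, aop μ * gop μ

/-- `𝒜₊^S = Σ_{μ∈S} a_μ†γ_μ`. -/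
def ApS (S : Finset (Fin 4)) : Module.End ℂ V := ∑ μ ∈ S, adop μ * gop μ

/-- `𝒜₀^S = (1/2)Σ_{μ∈S} {a_μ†, a_μ}`. -/
def A0S (S : Finset (Fin 4)) : Module.End ℂ V :=
  (2⁻¹ : ℂ) • ∑ μ ∈ S, (adop μ * aop μ + aop μ * adop μ)

/-- An `osp(1|2)` system of operators on `V`. -/
def IsOspSystem (A0 Ap Am P : Module.End ℂ V) : Prop :=
  Ap * Am + Am * Ap = 2 * A0 ∧
  A0 * Ap - Ap * A0 = Ap ∧
  A0 * Am - Am * A0 = -Am ∧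
  P * A0 - A0 * P = 0 ∧
  P * Ap + Ap * P = 0 ∧
  P * Am + Am * P = 0 ∧
  P * P = 1

/-! The operators `a_μ`, `a_μ†` satisfy the canonical commutation relations, the `γ_μ` the
Clifford relations, and the two families commute. For any finite set `S` of modes these relations
alone give `{𝒜₊, 𝒜₋} = Σ_{μ∈S} {a_μ†, a_μ} = 2𝒜₀`, the cross terms `μ ≠ ν` cancelling because
`γ_μγ_ν = -γ_νγ_μ`, and `[𝒜₀, 𝒜_±] = ±𝒜_±`. A parity operator only has to commute with the
bosonic operators, anticommute with `γ_μ` for `μ ∈ S` and square to `1`; `iγ_μγ_ν` and the volume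
element `γ₁γ₂γ₃γ₄` of the four-dimensional Clifford algebra are such operators. -/

open Finset

section Anticommute

variable {R : Type*} [Ring R] {x y z : R}

def Anticommute (x y : R) : Prop := x * y + y * x = 0

theorem Anticommute.eq_neg (h : Anticommute x y) : x * y = -(y * x) :=
  eq_neg_of_add_eq_zero_left h

theorem Anticommute.symm (h : Anticommute x y) : Anticommute y x :=
  (add_comm _ _).trans h

theorem Anticommute.neg_left (h : Anticommute x y) : Anticommute (-x) y := by
  rw [Anticommute, neg_mul, mul_neg, ← neg_add, h, neg_zero]

theorem Anticommute.smul_left {K : Type*} [CommSemiring K] [Algebra K R] (h : Anticommute x y)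
    (c : K) : Anticommute (c • x) y := by
  rw [Anticommute, smul_mul_assoc, mul_smul_comm, ← smul_add, h, smul_zero]

theorem Anticommute.map {F S : Type*} [Ring S] [FunLike F R S] [RingHomClass F R S]
    (h : Anticommute x y) (f : F) : Anticommute (f x) (f y) := by
  rw [Anticommute, ← map_mul, ← map_mul, ← map_add, h, map_zero]

theorem Anticommute.commute_mul (hx : Anticommute x z) (hy : Anticommute y z) :
    Commute (x * y) z := by
  rw [Commute, SemiconjBy, mul_assoc, hy.eq_neg, mul_neg, ← mul_assoc, hx.eq_neg, neg_mul,
    neg_neg, mul_assoc]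

theorem Anticommute.mul_commute (hx : Anticommute x z) (hy : Commute y z) :
    Anticommute (x * y) z := by
  rw [Anticommute, mul_assoc, hy.eq, ← mul_assoc, ← mul_assoc, ← add_mul, hx, zero_mul]

theorem Commute.mul_anticommute (hx : Commute x z) (hy : Anticommute y z) :
    Anticommute (x * y) z := by
  rw [Anticommute, mul_assoc, ← mul_assoc z, ← hx.eq, mul_assoc, ← mul_add, hy, mul_zero]

theorem Anticommute.sum_right {ι : Type*} {s : Finset ι} {f : ι → R}
    (h : ∀ i ∈ s, Anticommute x (f i)) : Anticommute x (∑ i ∈ s, f i) := by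
  rw [Anticommute, mul_sum, sum_mul, ← sum_add_distrib]
  exact sum_eq_zero h

theorem Commute.anticomm_right (hx : Commute z x) (hy : Commute z y) :
    Commute z (x * y + y * x) :=
  (hx.mul_right hy).add_right (hy.mul_right hx)

end Anticommute

section Sums

variable {R : Type*} [Ring R] {ι : Type*}

theorem sum_mul_sum_add_sum_mul_sum (s : Finset ι) (f h : ι → R) :
    (∑ μ ∈ s, f μ) * (∑ ν ∈ s, h ν) + (∑ ν ∈ s, h ν) * (∑ μ ∈ s, f μ)
      = ∑ μ ∈ s, ∑ ν ∈ s, (f μ * h ν + h ν * f μ) := by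
  rw [sum_mul_sum, sum_mul_sum, sum_comm (s := s) (t := s) (f := fun ν μ => h ν * f μ)]
  simp only [← sum_add_distrib]

theorem sum_mul_sum_sub_sum_mul_sum (s : Finset ι) (f h : ι → R) :
    (∑ μ ∈ s, f μ) * (∑ ν ∈ s, h ν) - (∑ ν ∈ s, h ν) * (∑ μ ∈ s, f μ)
      = ∑ μ ∈ s, ∑ ν ∈ s, (f μ * h ν - h ν * f μ) := by
  rw [sum_mul_sum, sum_mul_sum, sum_comm (s := s) (t := s) (f := fun ν μ => h ν * f μ)]
  simp only [← sum_sub_distrib]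

theorem sum_sum_ite_eq [DecidableEq ι] (s : Finset ι) (f : ι → R) :
    ∑ μ ∈ s, ∑ ν ∈ s, (if μ = ν then f ν else 0) = ∑ μ ∈ s, f μ :=
  sum_congr rfl fun μ hμ => sum_ite_eq_of_mem s μ f hμ

theorem commutator_mul_of_commute {x y z : R} (h : Commute z x) :
    x * (y * z) - y * z * x = (x * y - y * x) * z := by
  rw [sub_mul, mul_assoc y, h.eq, ← mul_assoc, ← mul_assoc]

theorem inv_two_smul_two_mul {K A : Type*} [Field K] [NeZero (2 : K)] [Ring A] [Algebra K A]
    (x : A) : (2⁻¹ : K) • (2 * x) = x := by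
  rw [two_mul, ← two_smul K, inv_smul_smul₀ two_ne_zero]

theorem smul_mul_sub_mul_smul {K A : Type*} [CommSemiring K] [Ring A] [Algebra K A] (c : K)
    (x y : A) : c • x * y - y * c • x = c • (x * y - y * x) := by
  rw [smul_mul_assoc, mul_smul_comm, smul_sub]

end Sums

section Oscillators

variable {R : Type*} [Ring R] {ι : Type*}

structure IsCCRFamily (a b : ι → R) : Prop where
  ann_comm : ∀ μ ν, Commute (a μ) (a ν)
  cre_comm : ∀ μ ν, Commute (b μ) (b ν)
  ann_cre_self : ∀ μ, a μ * b μ - b μ * a μ = 1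
  ann_cre_of_ne : ∀ {μ ν}, μ ≠ ν → Commute (a μ) (b ν)

structure IsCliffordFamily (g : ι → R) : Prop where
  mul_self : ∀ μ, g μ * g μ = 1
  anticommute : ∀ {μ ν}, μ ≠ ν → Anticommute (g μ) (g ν)

theorem IsCCRFamily.map {F S : Type*} [Ring S] [FunLike F R S] [RingHomClass F R S]
    {a b : ι → R} (h : IsCCRFamily a b) (f : F) :
    IsCCRFamily (fun μ => f (a μ)) (fun μ => f (b μ)) where
  ann_comm μ ν := (h.ann_comm μ ν).map f
  cre_comm μ ν := (h.cre_comm μ ν).map f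
  ann_cre_self μ := by rw [← map_mul, ← map_mul, ← map_sub, h.ann_cre_self, map_one]
  ann_cre_of_ne hμν := (h.ann_cre_of_ne hμν).map f

theorem IsCliffordFamily.map {F S : Type*} [Ring S] [FunLike F R S] [RingHomClass F R S]
    {g : ι → R} (h : IsCliffordFamily g) (f : F) : IsCliffordFamily (fun μ => f (g μ)) where
  mul_self μ := by rw [← map_mul, h.mul_self, map_one]
  anticommute hμν := (h.anticommute hμν).map f

variable [DecidableEq ι] {a b g : ι → R}

namespace IsCCRFamily

theorem commutator_anticomm_cre (hab : IsCCRFamily a b) (μ ν : ι) :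
    (b μ * a μ + a μ * b μ) * b ν - b ν * (b μ * a μ + a μ * b μ)
      = if μ = ν then 2 * b ν else 0 := by
  split_ifs with h
  · subst h
    calc _ = (a μ * b μ - b μ * a μ) * b μ + b μ * (a μ * b μ - b μ * a μ) := by noncomm_ring
      _ = 2 * b μ := by rw [hab.ann_cre_self, one_mul, mul_one, two_mul]
  · have hc : Commute (b μ * a μ + a μ * b μ) (b ν) :=
      ((hab.cre_comm μ ν).mul_left (hab.ann_cre_of_ne h)).add_left
        ((hab.ann_cre_of_ne h).mul_left (hab.cre_comm μ ν))
    rw [hc.eq, sub_self]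

theorem commutator_anticomm_ann (hab : IsCCRFamily a b) (μ ν : ι) :
    (b μ * a μ + a μ * b μ) * a ν - a ν * (b μ * a μ + a μ * b μ)
      = if μ = ν then -(2 * a ν) else 0 := by
  split_ifs with h
  · subst h
    calc _ = -((a μ * b μ - b μ * a μ) * a μ + a μ * (a μ * b μ - b μ * a μ)) := by noncomm_ring
      _ = -(2 * a μ) := by rw [hab.ann_cre_self, one_mul, mul_one, two_mul]
  · have hc : Commute (b μ * a μ + a μ * b μ) (a ν) :=
      ((hab.ann_cre_of_ne (Ne.symm h)).symm.mul_left (hab.ann_comm μ ν)).add_left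
        ((hab.ann_comm μ ν).mul_left (hab.ann_cre_of_ne (Ne.symm h)).symm)
    rw [hc.eq, sub_self]

end IsCCRFamily

theorem anticomm_sum_cre_sum_ann (hab : IsCCRFamily a b) (hg : IsCliffordFamily g)
    (hga : ∀ μ ν, Commute (g μ) (a ν)) (hgb : ∀ μ ν, Commute (g μ) (b ν)) (s : Finset ι) :
    (∑ μ ∈ s, b μ * g μ) * (∑ μ ∈ s, a μ * g μ) + (∑ μ ∈ s, a μ * g μ) * (∑ μ ∈ s, b μ * g μ)
      = ∑ μ ∈ s, (b μ * a μ + a μ * b μ) := by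
  have pair (μ ν : ι) : b μ * g μ * (a ν * g ν) + a ν * g ν * (b μ * g μ)
      = if μ = ν then b ν * a ν + a ν * b ν else 0 := by
    have hsep : b μ * g μ * (a ν * g ν) + a ν * g ν * (b μ * g μ)
        = b μ * a ν * (g μ * g ν) + a ν * b μ * (g ν * g μ) := by
      simp only [mul_assoc, (hga μ ν).left_comm, (hgb ν μ).left_comm]
    rw [hsep]
    split_ifs with h
    · subst h
      rw [hg.mul_self, mul_one, mul_one]
    · rw [← (hab.ann_cre_of_ne (Ne.symm h)).eq, ← mul_add, hg.anticommute h, mul_zero]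
  rw [sum_mul_sum_add_sum_mul_sum]
  simp only [pair, sum_sum_ite_eq]

theorem commutator_sum_anticomm_sum_cre (hab : IsCCRFamily a b)
    (hga : ∀ μ ν, Commute (g μ) (a ν)) (hgb : ∀ μ ν, Commute (g μ) (b ν)) (s : Finset ι) :
    (∑ μ ∈ s, (b μ * a μ + a μ * b μ)) * (∑ μ ∈ s, b μ * g μ)
      - (∑ μ ∈ s, b μ * g μ) * (∑ μ ∈ s, (b μ * a μ + a μ * b μ))
      = 2 * ∑ μ ∈ s, b μ * g μ := by
  have pair (μ ν : ι) :
      (b μ * a μ + a μ * b μ) * (b ν * g ν) - b ν * g ν * (b μ * a μ + a μ * b μ)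
        = if μ = ν then 2 * (b ν * g ν) else 0 := by
    rw [commutator_mul_of_commute ((hgb ν μ).anticomm_right (hga ν μ)),
      hab.commutator_anticomm_cre, ite_mul, zero_mul, mul_assoc]
  rw [sum_mul_sum_sub_sum_mul_sum]
  simp only [pair, sum_sum_ite_eq, mul_sum]

theorem commutator_sum_anticomm_sum_ann (hab : IsCCRFamily a b)
    (hga : ∀ μ ν, Commute (g μ) (a ν)) (hgb : ∀ μ ν, Commute (g μ) (b ν)) (s : Finset ι) :
    (∑ μ ∈ s, (b μ * a μ + a μ * b μ)) * (∑ μ ∈ s, a μ * g μ)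
      - (∑ μ ∈ s, a μ * g μ) * (∑ μ ∈ s, (b μ * a μ + a μ * b μ))
      = -(2 * ∑ μ ∈ s, a μ * g μ) := by
  have pair (μ ν : ι) :
      (b μ * a μ + a μ * b μ) * (a ν * g ν) - a ν * g ν * (b μ * a μ + a μ * b μ)
        = if μ = ν then -(2 * (a ν * g ν)) else 0 := by
    rw [commutator_mul_of_commute ((hgb ν μ).anticomm_right (hga ν μ)),
      hab.commutator_anticomm_ann, ite_mul, zero_mul, neg_mul, mul_assoc]
  rw [sum_mul_sum_sub_sum_mul_sum]
  simp only [pair, sum_sum_ite_eq, mul_sum, sum_neg_distrib]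

end Oscillators

namespace IsCliffordFamily

variable {R : Type*} [Ring R] {ι : Type*} {g : ι → R}

theorem anticommute_mul_left (hg : IsCliffordFamily g) {μ ν : ι} (h : μ ≠ ν) :
    Anticommute (g μ * g ν) (g μ) := by
  rw [Anticommute, mul_assoc, ← mul_add, add_comm, hg.anticommute h, mul_zero]

theorem anticommute_mul_right (hg : IsCliffordFamily g) {μ ν : ι} (h : μ ≠ ν) :
    Anticommute (g μ * g ν) (g ν) := by
  rw [Anticommute, mul_assoc, hg.mul_self, mul_one, ← mul_assoc, (hg.anticommute h).symm.eq_neg,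
    neg_mul, mul_assoc, hg.mul_self, mul_one, add_neg_cancel]

theorem commute_mul (hg : IsCliffordFamily g) {μ ν κ : ι} (hμ : μ ≠ κ) (hν : ν ≠ κ) :
    Commute (g μ * g ν) (g κ) :=
  (hg.anticommute hμ).commute_mul (hg.anticommute hν)

theorem mul_mul_self (hg : IsCliffordFamily g) {μ ν : ι} (h : μ ≠ ν) :
    g μ * g ν * (g μ * g ν) = -1 := by
  rw [← mul_assoc, (hg.anticommute_mul_left h).eq_neg, neg_mul, ← mul_assoc (g μ), hg.mul_self,
    one_mul, hg.mul_self]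

theorem anticommute_I_smul_mul [Algebra ℂ R] [DecidableEq ι] (hg : IsCliffordFamily g) {μ ν : ι}
    (h : μ ≠ ν) : ∀ κ ∈ ({μ, ν} : Finset ι), Anticommute (Complex.I • (g μ * g ν)) (g κ) := by
  intro κ hκ
  rcases mem_insert.mp hκ with rfl | hκ
  · exact (hg.anticommute_mul_left h).smul_left _
  · rw [mem_singleton.mp hκ]
    exact (hg.anticommute_mul_right h).smul_left _

theorem I_smul_mul_mul_self [Algebra ℂ R] (hg : IsCliffordFamily g) {μ ν : ι} (h : μ ≠ ν) :
    Complex.I • (g μ * g ν) * (Complex.I • (g μ * g ν)) = 1 := by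
  rw [smul_mul_smul_comm, hg.mul_mul_self h, Complex.I_mul_I, neg_one_smul, neg_neg]

theorem anticommute_volume {γ : Fin 4 → R} (hγ : IsCliffordFamily γ) (κ : Fin 4) :
    Anticommute (γ 0 * γ 1 * γ 2 * γ 3) (γ κ) := by
  rw [mul_assoc]
  fin_cases κ
  · exact (hγ.anticommute_mul_left (by decide)).mul_commute (hγ.commute_mul (by decide) (by decide))
  · exact (hγ.anticommute_mul_right (by decide)).mul_commute
      (hγ.commute_mul (by decide) (by decide))
  · exact (hγ.commute_mul (by decide) (by decide)).mul_anticommute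
      (hγ.anticommute_mul_left (by decide))
  · exact (hγ.commute_mul (by decide) (by decide)).mul_anticommute
      (hγ.anticommute_mul_right (by decide))

theorem volume_mul_self {γ : Fin 4 → R} (hγ : IsCliffordFamily γ) :
    γ 0 * γ 1 * γ 2 * γ 3 * (γ 0 * γ 1 * γ 2 * γ 3) = 1 := by
  have hc : Commute (γ 0 * γ 1) (γ 2 * γ 3) :=
    (hγ.commute_mul (by decide) (by decide)).mul_right (hγ.commute_mul (by decide) (by decide))
  rw [mul_assoc _ (γ 2), hc.symm.mul_mul_mul_comm, hγ.mul_mul_self (by decide),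
    hγ.mul_mul_self (by decide), neg_one_mul, neg_neg]

end IsCliffordFamily

def IsOsp12System {A : Type*} [Ring A] (A0 Ap Am P : A) : Prop :=
  Ap * Am + Am * Ap = 2 * A0 ∧
  A0 * Ap - Ap * A0 = Ap ∧
  A0 * Am - Am * A0 = -Am ∧
  P * A0 - A0 * P = 0 ∧
  P * Ap + Ap * P = 0 ∧
  P * Am + Am * P = 0 ∧
  P * P = 1

theorem isOsp12System_of_oscillators {K A ι : Type*} [Field K] [NeZero (2 : K)] [Ring A]
    [Algebra K A] [DecidableEq ι] {a b g : ι → A} (hab : IsCCRFamily a b) (hg : IsCliffordFamily g)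
    (hga : ∀ μ ν, Commute (g μ) (a ν)) (hgb : ∀ μ ν, Commute (g μ) (b ν)) (s : Finset ι) {P : A}
    (hPa : ∀ μ, Commute P (a μ)) (hPb : ∀ μ, Commute P (b μ))
    (hPg : ∀ μ ∈ s, Anticommute P (g μ)) (hPP : P * P = 1) :
    IsOsp12System ((2⁻¹ : K) • ∑ μ ∈ s, (b μ * a μ + a μ * b μ)) (∑ μ ∈ s, b μ * g μ)
      (∑ μ ∈ s, a μ * g μ) P := by
  refine ⟨?_, ?_, ?_, ?_, ?_, ?_, hPP⟩
  · rw [anticomm_sum_cre_sum_ann hab hg hga hgb, mul_smul_comm, inv_two_smul_two_mul]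
  · rw [smul_mul_sub_mul_smul, commutator_sum_anticomm_sum_cre hab hga hgb, inv_two_smul_two_mul]
  · rw [smul_mul_sub_mul_smul, commutator_sum_anticomm_sum_ann hab hga hgb, smul_neg,
      inv_two_smul_two_mul]
  · exact sub_eq_zero.mpr
      ((Commute.sum_right _ _ _ fun μ _ => (hPb μ).anticomm_right (hPa μ)).smul_right _).eq
  · exact Anticommute.sum_right fun μ hμ => ((hPb μ).symm.mul_anticommute (hPg μ hμ).symm).symm
  · exact Anticommute.sum_right fun μ hμ => ((hPa μ).symm.mul_anticommute (hPg μ hμ).symm).symm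

theorem MvPolynomial.commute_pderiv {σ R : Type*} [CommRing R] (i j : σ) :
    Commute (pderiv (R := R) i).toLinearMap (pderiv j).toLinearMap := by
  have hbracket :
      ⁅pderiv i, pderiv j⁆ = (0 : Derivation R (MvPolynomial σ R) (MvPolynomial σ R)) :=
    derivation_ext fun k => by
      classical
      rw [Derivation.commutator_apply, Derivation.zero_apply, pderiv_X, pderiv_X]
      simp only [Pi.single_apply]
      split_ifs <;> simp
  rw [commute_iff_lie_eq, ← Derivation.commutator_coe_linear_map, hbracket,
    Derivation.coe_zero_linearMap]

theorem MvPolynomial.isCCRFamily_pderiv_X (σ R : Type*) [CommRing R] :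
    IsCCRFamily (fun i : σ => (pderiv (R := R) i).toLinearMap)
      (fun i => LinearMap.mulLeft R (X i)) where
  ann_comm := commute_pderiv
  cre_comm i j := LinearMap.ext fun p => by
    simp only [Module.End.mul_apply, LinearMap.mulLeft_apply]
    ring
  ann_cre_self i := LinearMap.ext fun p => by simp
  ann_cre_of_ne h := LinearMap.ext fun p => by simp [pderiv_X_of_ne (Ne.symm h)]

theorem Qform_apply (v : Fin 4 → ℂ) : Qform v = ∑ i, v i * v i := by
  simp [Qform, QuadraticMap.weightedSumSquares_apply]

theorem isCliffordFamily_γc : IsCliffordFamily γc where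
  mul_self μ := by
    rw [γc, CliffordAlgebra.ι_sq_scalar, Qform_apply]
    simp [Pi.single_apply]
  anticommute {μ ν} h := by
    refine CliffordAlgebra.ι_mul_ι_add_swap_of_isOrtho ?_
    rw [QuadraticMap.isOrtho_def]
    simp [Qform_apply, Pi.single_apply, mul_add, sum_add_distrib, h, Ne.symm h]

def cliffordAct : Cl →ₐ[ℂ] Module.End ℂ V :=
  (Module.End.lTensorAlgHom ℂ Cl Mpoly).comp (Algebra.lmul ℂ Cl)

def polyAct : Module.End ℂ Mpoly →ₐ[ℂ] Module.End ℂ V :=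
  Module.End.rTensorAlgHom ℂ Mpoly Cl

theorem commute_polyAct_cliffordAct (f : Module.End ℂ Mpoly) (p : Cl) :
    Commute (polyAct f) (cliffordAct p) :=
  (LinearMap.rTensor_comp_lTensor _ _ _).trans (LinearMap.lTensor_comp_rTensor _ _ _).symm

theorem gop_eq_cliffordAct (μ : Fin 4) : gop μ = cliffordAct (γc μ) := rfl

theorem isCCRFamily_aop_adop : IsCCRFamily aop adop :=
  (MvPolynomial.isCCRFamily_pderiv_X (Fin 4) ℂ).map polyAct

theorem isCliffordFamily_gop : IsCliffordFamily gop :=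
  isCliffordFamily_γc.map cliffordAct

theorem commute_gop_aop (μ ν : Fin 4) : Commute (gop μ) (aop ν) :=
  (commute_polyAct_cliffordAct _ _).symm

theorem commute_gop_adop (μ ν : Fin 4) : Commute (gop μ) (adop ν) :=
  (commute_polyAct_cliffordAct _ _).symm

theorem isOspSystem_of_cliffordAct (S : Finset (Fin 4)) {p : Cl}
    (hp : ∀ μ ∈ S, Anticommute p (γc μ)) (hpp : p * p = 1) :
    IsOspSystem (A0S S) (ApS S) (AmS S) (cliffordAct p) :=
  -- `IsOspSystem` is `IsOsp12System` on `Module.End ℂ V`, by unfolding.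
  isOsp12System_of_oscillators (K := ℂ) isCCRFamily_aop_adop isCliffordFamily_gop commute_gop_aop
    commute_gop_adop S (fun _ => (commute_polyAct_cliffordAct _ _).symm)
    (fun _ => (commute_polyAct_cliffordAct _ _).symm) (fun μ hμ => (hp μ hμ).map cliffordAct)
    (by rw [← map_mul, hpp, map_one])

/-- For each of `S = {1,2}`, `{3,4}`, `{1,2,3,4}`, the operators
`(𝒜₀^S, 𝒜₊^S, 𝒜₋^S, 𝒫^S)` form an `osp(1|2)` system on `V`. -/
theorem three_osp12_systems :
    IsOspSystem (A0S {0, 1}) (ApS {0, 1}) (AmS {0, 1})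
      (Complex.I • (gop 0 * gop 1)) ∧
    IsOspSystem (A0S {2, 3}) (ApS {2, 3}) (AmS {2, 3})
      (Complex.I • (gop 2 * gop 3)) ∧
    IsOspSystem (A0S {0, 1, 2, 3}) (ApS {0, 1, 2, 3}) (AmS {0, 1, 2, 3})
      (-(gop 0 * gop 1 * gop 2 * gop 3)) := by
  have hγ := isCliffordFamily_γc
  simp only [gop_eq_cliffordAct, ← map_mul, ← map_smul, ← map_neg cliffordAct]
  refine ⟨?_, ?_, ?_⟩
  · exact isOspSystem_of_cliffordAct _ (hγ.anticommute_I_smul_mul (by decide))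
      (hγ.I_smul_mul_mul_self (by decide))
  · exact isOspSystem_of_cliffordAct _ (hγ.anticommute_I_smul_mul (by decide))
      (hγ.I_smul_mul_mul_self (by decide))
  · exact isOspSystem_of_cliffordAct _ (fun κ _ => (hγ.anticommute_volume κ).neg_left)
      (by rw [neg_mul_neg, hγ.volume_mul_self])
end
end

section
/- In the spinorial realization on V = MvPolynomial (Fin 4) ℂ ⊗_ℂ Cl, let J_{μν} = −i(L_{μν} + Σ_{μν}) with L_{μν} = a_μ†a_ν − a_μa_ν† and Σ_{μν} = (1/2)γ_μγ_ν, and for S ∈ {{1,2}, {3,4}, {1,2,3,4}} let 𝒜₋^S = Σ_{μ∈S} a_μγ_μ, 𝒜₊^S = Σ_{μ∈S} a_μ†γ_μ, 𝒜₀^S = (1/2)Σ_{μ∈S}{a_μ†,a_μ}. Then the Howe duality commutations hold: [J₁₂, 𝒜_•^{1,2}] = 0 and [J₃₄, 𝒜_•^{3,4}] = 0 for • ∈ {0,+,−}, and [J_{ij}, 𝒜_•^{1,2,3,4}] = 0 for all 1 ≤ i < j ≤ 4 and • ∈ {0,+,−}. -/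
noncomputable section

open scoped TensorProduct

/-!
Under `M_{μν} = L_{μν} + Σ_{μν}` each of the families `a`, `a†`, `γ` transforms as a vector,
`⁅M_{μν}, x_ρ⁆ = δ_{νρ} x_μ - δ_{μρ} x_ν`: for `a, a†` this is the canonical commutation
relations acting through `L`, for `γ` the Clifford relations acting through `Σ`, and each family
commutes with the other piece of `M`. A sum `∑_{ρ ∈ S} x_ρ y_ρ` of products of two vectors is then
invariant under `M_{μν}` as soon as `μ, ν ∈ S`, since the two terms produced by the Leibniz rule
cancel; `𝒜₀^S`, `𝒜₊^S`, `𝒜₋^S` are such sums. Only these relations enter, so the argument works in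
any ring containing such families; on `V` they hold because `∂_μ` and `x_μ·` satisfy the Leibniz
rule, `γ_μ γ_ν + γ_ν γ_μ` is the polar form of `Q` on basis vectors, and operators acting on
different tensor factors commute.
-/

attribute [local instance] LieRing.ofAssociativeRing

section RingCommutator

variable {A : Type*} [Ring A]

theorem Ring.lie_mul (x y z : A) : ⁅x, y * z⁆ = ⁅x, y⁆ * z + y * ⁅x, z⁆ := by
  simp only [Ring.lie_def]; noncomm_ring

theorem Ring.mul_lie (x y z : A) : ⁅x * y, z⁆ = x * ⁅y, z⁆ + ⁅x, z⁆ * y := by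
  simp only [Ring.lie_def]; noncomm_ring

theorem Ring.mul_lie_eq_anticomm (x y z : A) :
    ⁅x * y, z⁆ = x * (y * z + z * y) - (x * z + z * x) * y := by
  simp only [Ring.lie_def]; noncomm_ring

variable {ι : Type*} [DecidableEq ι]

def IsVectorOperator (m : A) (μ ν : ι) (x : ι → A) : Prop :=
  ∀ ρ, ⁅m, x ρ⁆ = (if ν = ρ then x μ else 0) - (if μ = ρ then x ν else 0)

theorem IsVectorOperator.add_of_lie_eq_zero {m m' : A} {μ ν : ι} {x : ι → A}
    (hx : IsVectorOperator m μ ν x) (h' : ∀ ρ, ⁅m', x ρ⁆ = 0) :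
    IsVectorOperator (m + m') μ ν x := fun ρ => by
  rw [add_lie, hx ρ, h' ρ, add_zero]

theorem IsVectorOperator.lie_sum_mul_eq_zero {m : A} {μ ν : ι} {x y : ι → A}
    (hx : IsVectorOperator m μ ν x) (hy : IsVectorOperator m μ ν y) {S : Finset ι}
    (hμ : μ ∈ S) (hν : ν ∈ S) : ⁅m, ∑ ρ ∈ S, x ρ * y ρ⁆ = 0 := by
  simp only [lie_sum, Ring.lie_mul, hx _, hy _, sub_mul, mul_sub, ite_mul, mul_ite, zero_mul,
    mul_zero, Finset.sum_add_distrib, Finset.sum_sub_distrib, Finset.sum_ite_eq, hμ, hν, if_true]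
  abel

end RingCommutator

structure BosonCliffordSystem (A ι : Type*) [Ring A] [DecidableEq ι] where
  a : ι → A
  ad : ι → A
  γ : ι → A
  lie_a_a : ∀ μ ν, ⁅a μ, a ν⁆ = 0
  lie_ad_ad : ∀ μ ν, ⁅ad μ, ad ν⁆ = 0
  lie_a_ad : ∀ μ ν, ⁅a μ, ad ν⁆ = if μ = ν then 1 else 0
  γ_anticomm : ∀ μ ν, γ μ * γ ν + γ ν * γ μ = if μ = ν then 2 else 0
  lie_a_γ : ∀ μ ν, ⁅a μ, γ ν⁆ = 0
  lie_ad_γ : ∀ μ ν, ⁅ad μ, γ ν⁆ = 0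

namespace BosonCliffordSystem

variable {A ι : Type*} [Ring A] [DecidableEq ι] (s : BosonCliffordSystem A ι)

def orbital (μ ν : ι) : A := s.ad μ * s.a ν - s.a μ * s.ad ν

variable (K : Type*) [Field K] [Algebra K A]

def spin (μ ν : ι) : A := (2⁻¹ : K) • (s.γ μ * s.γ ν)

def angularMomentum (μ ν : ι) : A := s.orbital μ ν + s.spin K μ ν

variable {K}

theorem lie_ad_a (μ ν : ι) : ⁅s.ad μ, s.a ν⁆ = -if μ = ν then 1 else 0 := by
  rw [← lie_skew, s.lie_a_ad]; simp [eq_comm]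

theorem isVectorOperator_orbital_a (μ ν : ι) : IsVectorOperator (s.orbital μ ν) μ ν s.a :=
  fun ρ => by
  simp only [orbital, sub_lie, Ring.mul_lie, s.lie_a_a, lie_ad_a, neg_mul, mul_neg, ite_mul,
    mul_ite, one_mul, mul_one, zero_mul, mul_zero]
  abel

theorem isVectorOperator_orbital_ad (μ ν : ι) : IsVectorOperator (s.orbital μ ν) μ ν s.ad :=
  fun ρ => by
  simp only [orbital, sub_lie, Ring.mul_lie, s.lie_ad_ad, s.lie_a_ad, mul_ite, ite_mul, one_mul,
    mul_one, zero_mul, mul_zero]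
  abel

theorem lie_orbital_γ (μ ν ρ : ι) : ⁅s.orbital μ ν, s.γ ρ⁆ = 0 := by
  simp only [orbital, sub_lie, Ring.mul_lie, s.lie_a_γ, s.lie_ad_γ, mul_zero, zero_mul, add_zero,
    sub_zero]

theorem isVectorOperator_spin_γ [NeZero (2 : K)] (μ ν : ι) :
    IsVectorOperator (s.spin K μ ν) μ ν s.γ := fun ρ => by
  have half_add_self (x : A) : (2⁻¹ : K) • (x + x) = x := by
    rw [← two_smul K x, smul_smul, inv_mul_cancel₀ two_ne_zero, one_smul]
  rw [spin, smul_lie, Ring.mul_lie_eq_anticomm, s.γ_anticomm, s.γ_anticomm]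
  split_ifs <;> simp only [mul_two, two_mul, mul_zero, zero_mul, sub_zero, zero_sub, smul_neg,
    smul_sub, half_add_self, smul_zero]

theorem lie_γ_a (μ ν : ι) : ⁅s.γ μ, s.a ν⁆ = 0 := by
  rw [← lie_skew, s.lie_a_γ, neg_zero]

theorem lie_γ_ad (μ ν : ι) : ⁅s.γ μ, s.ad ν⁆ = 0 := by
  rw [← lie_skew, s.lie_ad_γ, neg_zero]

theorem lie_spin_a (μ ν ρ : ι) : ⁅s.spin K μ ν, s.a ρ⁆ = 0 := by
  simp only [spin, smul_lie, Ring.mul_lie, lie_γ_a, mul_zero, zero_mul, add_zero, smul_zero]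

theorem lie_spin_ad (μ ν ρ : ι) : ⁅s.spin K μ ν, s.ad ρ⁆ = 0 := by
  simp only [spin, smul_lie, Ring.mul_lie, lie_γ_ad, mul_zero, zero_mul, add_zero, smul_zero]

theorem isVectorOperator_angularMomentum_a (μ ν : ι) :
    IsVectorOperator (s.angularMomentum K μ ν) μ ν s.a :=
  (s.isVectorOperator_orbital_a μ ν).add_of_lie_eq_zero (s.lie_spin_a μ ν)

theorem isVectorOperator_angularMomentum_ad (μ ν : ι) :
    IsVectorOperator (s.angularMomentum K μ ν) μ ν s.ad :=
  (s.isVectorOperator_orbital_ad μ ν).add_of_lie_eq_zero (s.lie_spin_ad μ ν)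

theorem isVectorOperator_angularMomentum_γ [NeZero (2 : K)] (μ ν : ι) :
    IsVectorOperator (s.angularMomentum K μ ν) μ ν s.γ := by
  rw [angularMomentum, add_comm]
  exact (s.isVectorOperator_spin_γ μ ν).add_of_lie_eq_zero (s.lie_orbital_γ μ ν)

variable {S : Finset ι} {μ ν : ι}

theorem commute_angularMomentum_sum_a_mul_γ [NeZero (2 : K)] (hμ : μ ∈ S) (hν : ν ∈ S) :
    Commute (s.angularMomentum K μ ν) (∑ ρ ∈ S, s.a ρ * s.γ ρ) :=
  commute_iff_lie_eq.mpr <| (s.isVectorOperator_angularMomentum_a μ ν).lie_sum_mul_eq_zero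
    (s.isVectorOperator_angularMomentum_γ μ ν) hμ hν

theorem commute_angularMomentum_sum_ad_mul_γ [NeZero (2 : K)] (hμ : μ ∈ S) (hν : ν ∈ S) :
    Commute (s.angularMomentum K μ ν) (∑ ρ ∈ S, s.ad ρ * s.γ ρ) :=
  commute_iff_lie_eq.mpr <| (s.isVectorOperator_angularMomentum_ad μ ν).lie_sum_mul_eq_zero
    (s.isVectorOperator_angularMomentum_γ μ ν) hμ hν

theorem commute_angularMomentum_half_sum_anticomm (hμ : μ ∈ S) (hν : ν ∈ S) :
    Commute (s.angularMomentum K μ ν)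
      ((2⁻¹ : K) • ∑ ρ ∈ S, (s.ad ρ * s.a ρ + s.a ρ * s.ad ρ)) := by
  have ha := s.isVectorOperator_angularMomentum_a (K := K) μ ν
  have had := s.isVectorOperator_angularMomentum_ad (K := K) μ ν
  refine Commute.smul_right (commute_iff_lie_eq.mpr ?_) _
  rw [Finset.sum_add_distrib, lie_add, had.lie_sum_mul_eq_zero ha hμ hν,
    ha.lie_sum_mul_eq_zero had hμ hν, add_zero]

section Complex

variable [Algebra ℂ A]

def J (s : BosonCliffordSystem A ι) (μ ν : ι) : A :=
  if μ = ν then 0 else -(Complex.I • s.angularMomentum ℂ μ ν)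

theorem commute_J {x : A} (h : Commute (s.angularMomentum ℂ μ ν) x) :
    Commute (s.J μ ν) x := by
  unfold J
  split_ifs
  · exact Commute.zero_left x
  · exact (h.smul_left Complex.I).neg_left

end Complex

end BosonCliffordSystem

section Spinorial

open MvPolynomial

theorem AlgHom.map_ring_lie {R A B : Type*} [CommRing R] [Ring A] [Ring B] [Algebra R A]
    [Algebra R B] (f : A →ₐ[R] B) (x y : A) : f ⁅x, y⁆ = ⁅f x, f y⁆ := by
  simp only [Ring.lie_def, map_sub, map_mul]

theorem lie_rTensor_lTensor {R M N : Type*} [CommRing R] [AddCommGroup M] [Module R M]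
    [AddCommGroup N] [Module R N] (f : Module.End R M) (g : Module.End R N) :
    ⁅f.rTensor N, g.lTensor M⁆ = 0 := by
  rw [Ring.lie_def, sub_eq_zero, Module.End.mul_eq_comp, Module.End.mul_eq_comp,
    LinearMap.rTensor_comp_lTensor, LinearMap.lTensor_comp_rTensor]

theorem lie_pderiv_pderiv {R σ : Type*} [CommRing R] (i j : σ) :
    ⁅(pderiv (R := R) i).toLinearMap, (pderiv (R := R) j).toLinearMap⁆ = 0 := by
  classical
  have : ⁅pderiv i, pderiv j⁆ = (0 : Derivation R (MvPolynomial σ R) (MvPolynomial σ R)) :=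
    derivation_ext fun k => by
      rw [Derivation.commutator_apply]
      simp [pderiv_X, Pi.single_apply, apply_ite]
  rw [← Derivation.commutator_coe_linear_map, this]
  rfl

theorem lie_pderiv_mulLeft_X {R σ : Type*} [CommRing R] [DecidableEq σ] (i j : σ) :
    ⁅(pderiv (R := R) i).toLinearMap, LinearMap.mulLeft R (X j : MvPolynomial σ R)⁆ =
      if i = j then 1 else 0 := by
  refine LinearMap.ext fun p => ?_
  rcases eq_or_ne i j with rfl | h
  · simp [Ring.lie_def, Derivation.leibniz]
  · simp [Ring.lie_def, Derivation.leibniz, pderiv_X_of_ne h.symm, h]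

theorem lie_mulLeft_mulLeft {R B : Type*} [CommRing R] [CommRing B] [Algebra R B] (x y : B) :
    ⁅LinearMap.mulLeft R x, LinearMap.mulLeft R y⁆ = 0 :=
  LinearMap.ext fun p => by simp [Ring.lie_def, mul_left_comm]

theorem polar_Qform (x y : Fin 4 → ℂ) :
    QuadraticMap.polar Qform x y = 2 * ∑ i, x i * y i := by
  simp only [QuadraticMap.polar, Qform, QuadraticMap.weightedSumSquares_apply, one_smul,
    Pi.add_apply, ← Finset.sum_sub_distrib, Finset.mul_sum]
  exact Finset.sum_congr rfl fun i _ => by ring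

theorem γc_mul_add_swap (μ ν : Fin 4) :
    γc μ * γc ν + γc ν * γc μ = if μ = ν then 2 else 0 := by
  rw [γc, γc, CliffordAlgebra.ι_mul_ι_add_swap, polar_Qform]
  rcases eq_or_ne μ ν with rfl | h
  · simp [Pi.single_apply]
    exact map_ofNat _ 2
  · simp [Pi.single_apply, h, h.symm]

def polyAction : Module.End ℂ Mpoly →ₐ[ℂ] Module.End ℂ V := Module.End.rTensorAlgHom ℂ Mpoly Cl

def cliffordAction : Cl →ₐ[ℂ] Module.End ℂ V :=
  (Module.End.lTensorAlgHom ℂ Cl Mpoly).comp (Algebra.lmul ℂ Cl)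

def spinorial : BosonCliffordSystem (Module.End ℂ V) (Fin 4) where
  a := aop
  ad := adop
  γ := gop
  lie_a_a μ ν := by
    -- `A` and `B` are given so that their `Ring` instances are not guessed before `polyAction`
    -- is unified: on `Module.End ℂ V` the two routes to the additive structure differ.
    have h := AlgHom.map_ring_lie (A := Module.End ℂ Mpoly) (B := Module.End ℂ V) polyAction
      (pderiv (R := ℂ) μ).toLinearMap (pderiv (R := ℂ) ν).toLinearMap
    rw [lie_pderiv_pderiv, map_zero] at h
    exact h.symm
  lie_ad_ad μ ν := by
    have h := AlgHom.map_ring_lie (A := Module.End ℂ Mpoly) (B := Module.End ℂ V) polyAction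
      (LinearMap.mulLeft ℂ (X μ : Mpoly)) (LinearMap.mulLeft ℂ (X ν : Mpoly))
    rw [lie_mulLeft_mulLeft, map_zero] at h
    exact h.symm
  lie_a_ad μ ν := by
    have h := AlgHom.map_ring_lie (A := Module.End ℂ Mpoly) (B := Module.End ℂ V) polyAction
      (pderiv (R := ℂ) μ).toLinearMap (LinearMap.mulLeft ℂ (X ν : Mpoly))
    rw [lie_pderiv_mulLeft_X, apply_ite polyAction, map_one, map_zero] at h
    exact h.symm
  γ_anticomm μ ν := by
    change cliffordAction (γc μ) * cliffordAction (γc ν) +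
      cliffordAction (γc ν) * cliffordAction (γc μ) = _
    rw [← map_mul, ← map_mul, ← map_add, γc_mul_add_swap]
    split_ifs
    exacts [map_ofNat _ 2, map_zero _]
  lie_a_γ _ _ := lie_rTensor_lTensor _ _
  lie_ad_γ _ _ := lie_rTensor_lTensor _ _

end Spinorial

/-- Howe duality commutations: `J₁₂` commutes with the `osp(1|2)` operators labelled by
`{1,2}`, `J₃₄` with those labelled by `{3,4}`, and every `J_{ij}` commutes with the
`osp(1|2)` operators labelled by `{1,2,3,4}`. -/
theorem howe_duality_commutations :
    (Jop 0 1 * A0S {0, 1} - A0S {0, 1} * Jop 0 1 = 0) ∧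
    (Jop 0 1 * ApS {0, 1} - ApS {0, 1} * Jop 0 1 = 0) ∧
    (Jop 0 1 * AmS {0, 1} - AmS {0, 1} * Jop 0 1 = 0) ∧
    (Jop 2 3 * A0S {2, 3} - A0S {2, 3} * Jop 2 3 = 0) ∧
    (Jop 2 3 * ApS {2, 3} - ApS {2, 3} * Jop 2 3 = 0) ∧
    (Jop 2 3 * AmS {2, 3} - AmS {2, 3} * Jop 2 3 = 0) ∧
    (∀ i j : Fin 4, i < j →
      Jop i j * A0S {0, 1, 2, 3} - A0S {0, 1, 2, 3} * Jop i j = 0 ∧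
      Jop i j * ApS {0, 1, 2, 3} - ApS {0, 1, 2, 3} * Jop i j = 0 ∧
      Jop i j * AmS {0, 1, 2, 3} - AmS {0, 1, 2, 3} * Jop i j = 0) := by
  have howe {S : Finset (Fin 4)} {μ ν : Fin 4} (hμ : μ ∈ S) (hν : ν ∈ S) :
      Jop μ ν * A0S S - A0S S * Jop μ ν = 0 ∧ Jop μ ν * ApS S - ApS S * Jop μ ν = 0 ∧
        Jop μ ν * AmS S - AmS S * Jop μ ν = 0 := by
    have commutator_eq_zero {X : Module.End ℂ V}
        (h : Commute (spinorial.angularMomentum ℂ μ ν) X) : Jop μ ν * X - X * Jop μ ν = 0 :=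
      sub_eq_zero.mpr (spinorial.commute_J h).eq
    exact ⟨commutator_eq_zero (spinorial.commute_angularMomentum_half_sum_anticomm hμ hν),
      commutator_eq_zero (spinorial.commute_angularMomentum_sum_ad_mul_γ hμ hν),
      commutator_eq_zero (spinorial.commute_angularMomentum_sum_a_mul_γ hμ hν)⟩
  obtain ⟨h12_0, h12_p, h12_m⟩ := howe (S := {0, 1}) (μ := 0) (ν := 1) (by simp) (by simp)
  obtain ⟨h34_0, h34_p, h34_m⟩ := howe (S := {2, 3}) (μ := 2) (ν := 3) (by simp) (by simp)
  exact ⟨h12_0, h12_p, h12_m, h34_0, h34_p, h34_m,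
    fun i j _ => howe (by fin_cases i <;> simp) (by fin_cases j <;> simp)⟩
end
end
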